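/- arXiv:2109.13627 — 5 statements merged into one kernel-verified Lean document; each statement's English description precedes it below -/
import Mathlib

section
/- If (H,π) is an induced signed subgraph of a signed graph (G,σ) (i.e., H is an induced subgraph of G and π is the restriction of σ to E(H)), then ψ(H,π) ≤ ψ(G,σ). -/
open SimpleGraph

/-- A signature on a graph: a symmetric assignment of signs (`1` or `-1`) to pairs of
vertices (only the values on edges are relevant). -/
def IsSignature {V : Type*} (σ : V → V → ℤ) : Prop :=
  (∀ u v, σ u v = σ v u) ∧ (∀ u v, σ u v = 1 ∨ σ u v = -1)

/-- `σ'` is obtained from `σ` by switching a set of vertices: every vertex gets a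
switching value `±1`, and the sign of an edge is multiplied by the values at its ends. -/
def SwitchEquiv {V : Type*} (σ σ' : V → V → ℤ) : Prop :=
  ∃ s : V → ℤ, (∀ v, s v = 1 ∨ s v = -1) ∧ ∀ u v, σ' u v = s u * s v * σ u v

/-- The colour set `M_k`, as a set of integers: `{±1, …, ±n}` if `k = 2n`, and
`{-n, …, -1, 0, 1, …, n}` if `k = 2n+1` (colour `±0` is represented by `0`). -/
def colourSet (k : ℕ) : Set ℤ :=
  if Even k then {i | i ≠ 0 ∧ i.natAbs ≤ k / 2} else {i | i.natAbs ≤ k / 2}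

/-- A proper `k`-colouring of the signed graph `(G, σ)`: colours come from `M_k` and,
for each edge `uv`, `φ u ≠ σ(uv) · φ v`. -/
def IsProperColouring {V : Type*} (G : SimpleGraph V) (σ : V → V → ℤ) (k : ℕ)
    (φ : V → ℤ) : Prop :=
  (∀ v, φ v ∈ colourSet k) ∧ ∀ u v, G.Adj u v → φ u ≠ σ u v * φ v

/-- The sign of an integer for the purpose of switching: `-1` for negative colours,
`1` otherwise. -/
def isgn (x : ℤ) : ℤ := if x < 0 then -1 else 1

/-- The sign of the edge `uv` after switching every vertex whose colour is negative. -/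
def redSign {V : Type*} (σ : V → V → ℤ) (φ : V → ℤ) (u v : V) : ℤ :=
  isgn (φ u) * isgn (φ v) * σ u v

/-- After switching all negatively-coloured vertices and taking absolute values of
colours, there is an edge of `(G, σ)` whose ends get values `i` and `j` and whose
resulting sign is `s`. -/
def HasEdgeType {V : Type*} (G : SimpleGraph V) (σ : V → V → ℤ) (φ : V → ℤ)
    (i j : ℕ) (s : ℤ) : Prop :=
  ∃ u v, G.Adj u v ∧ (φ u).natAbs = i ∧ (φ v).natAbs = j ∧ redSign σ φ u v = s

/-- A complete `k`-colouring of the signed graph `(G, σ)`. -/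
def IsCompleteColouring {V : Type*} (G : SimpleGraph V) (σ : V → V → ℤ) (k : ℕ)
    (φ : V → ℤ) : Prop :=
  IsProperColouring G σ k φ ∧
  (∀ i j : ℕ, (i : ℤ) ∈ colourSet k → (j : ℤ) ∈ colourSet k → i ≠ j →
    HasEdgeType G σ φ i j 1 ∧ HasEdgeType G σ φ i j (-1)) ∧
  (∀ i : ℕ, 1 ≤ i → (i : ℤ) ∈ colourSet k → HasEdgeType G σ φ i i (-1))

/-- Some signed graph equivalent to `(G, σ)` admits a complete `k`-colouring. -/
def AdmitsComplete {V : Type*} (G : SimpleGraph V) (σ : V → V → ℤ) (k : ℕ) : Prop :=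
  ∃ σ', IsSignature σ' ∧ SwitchEquiv σ σ' ∧ ∃ φ, IsCompleteColouring G σ' k φ

/-- The achromatic number of the signed graph `(G, σ)`: the largest `k` such that some
signed graph equivalent to `(G, σ)` admits a complete `k`-colouring. -/
noncomputable def psi {V : Type*} (G : SimpleGraph V) (σ : V → V → ℤ) : ℕ :=
  sSup {k | AdmitsComplete G σ k}

/-- The chromatic number of the signed graph `(G, σ)`: the smallest `k` such that
`(G, σ)` admits a proper `k`-colouring. -/
noncomputable def chi {V : Type*} (G : SimpleGraph V) (σ : V → V → ℤ) : ℕ :=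
  sInf {k | ∃ φ, IsProperColouring G σ k φ}

/-!
Switch the induced subgraph as its complete `k`-colouring requires, extend the switching trivially
to `G`, and add the missing vertices one at a time. If some colour of `M_k` is still allowed at
the new vertex `v`, use it. Otherwise every colour is forbidden by a neighbour of `v`, and these
neighbours join `v` to every nonzero value with both signs: for even `k`, `v` takes the new colour
`±0`; for odd `k`, `v` and the independent `±0`-class move to the new value `k / 2 + 1`. Either way
a complete colouring with at least as many colours results. Finally `ψ` is a genuine maximum,
since a complete `k`-colouring uses every value `1, …, k / 2`.
-/

section Signs

lemma mem_colourSet_iff {k : ℕ} {c : ℤ} :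
    c ∈ colourSet k ↔ c.natAbs ≤ k / 2 ∧ (k % 2 = 0 → c ≠ 0) := by
  unfold colourSet
  split_ifs with hk
  · simp [Nat.even_iff.mp hk, and_comm]
  · simp [Nat.even_iff.not.mp hk]

lemma isgn_of_nonneg {x : ℤ} (hx : 0 ≤ x) : isgn x = 1 := if_neg (not_lt.2 hx)

lemma isgn_sign_mul {t x : ℤ} (ht : t = 1 ∨ t = -1) (hx : x ≠ 0) :
    isgn (t * x) = t * isgn x := by
  unfold isgn
  rcases ht with rfl | rfl <;> split_ifs <;> omega

lemma natAbs_sign_mul {t : ℤ} (ht : t = 1 ∨ t = -1) (x : ℤ) : (t * x).natAbs = x.natAbs := by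
  rcases ht with rfl | rfl <;> simp

lemma ne_sign_mul_comm {t a b : ℤ} (ht : t = 1 ∨ t = -1) : a ≠ t * b ↔ b ≠ t * a := by
  rcases ht with rfl | rfl <;> omega

lemma ne_sign_mul_of_natAbs_ne {t a b : ℤ} (ht : t = 1 ∨ t = -1) (h : a.natAbs ≠ b.natAbs) :
    a ≠ t * b := by
  rcases ht with rfl | rfl <;> omega

lemma IsSignature.mul_symm {V : Type*} {τ : V → V → ℤ} (hτ : IsSignature τ) (u v : V) :
    τ u v * τ v u = 1 := by
  rw [hτ.1 v u]
  rcases hτ.2 u v with h | h <;> simp [h]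

lemma IsSignature.of_switchEquiv {V : Type*} {σ τ : V → V → ℤ} (hσ : IsSignature σ)
    (h : SwitchEquiv σ τ) : IsSignature τ := by
  obtain ⟨t, ht, hτ⟩ := h
  refine ⟨fun u v => by rw [hτ, hτ, hσ.1 u v]; ring, fun u v => ?_⟩
  rw [hτ]
  rcases ht u with hu | hu <;> rcases ht v with hv | hv <;> rcases hσ.2 u v with h | h <;>
    simp [hu, hv, h]

end Signs

section ColouringOn

variable {V : Type*} {G : SimpleGraph V} {τ : V → V → ℤ} {k : ℕ} {φ Φ : V → ℤ}
  {s t : Set V} {u v : V}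

variable (G τ) in
def HasEdgeTypeOn (φ : V → ℤ) (s : Set V) (i j : ℕ) (sg : ℤ) : Prop :=
  ∃ u ∈ s, ∃ w ∈ s, G.Adj u w ∧ (φ u).natAbs = i ∧ (φ w).natAbs = j ∧ redSign τ φ u w = sg

variable (G τ) in
def IsProperOn (φ : V → ℤ) (s : Set V) : Prop :=
  ∀ u ∈ s, ∀ w ∈ s, G.Adj u w → φ u ≠ τ u w * φ w

variable (G τ) in
structure IsCompleteColouringOn (k : ℕ) (φ : V → ℤ) (s : Set V) : Prop where
  mem_colourSet : ∀ v ∈ s, φ v ∈ colourSet k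
  isProperOn : IsProperOn G τ φ s
  pair : ∀ i j : ℕ, (i : ℤ) ∈ colourSet k → (j : ℤ) ∈ colourSet k → i ≠ j →
    ∀ sg : ℤ, sg = 1 ∨ sg = -1 → HasEdgeTypeOn G τ φ s i j sg
  self : ∀ i : ℕ, 1 ≤ i → (i : ℤ) ∈ colourSet k → HasEdgeTypeOn G τ φ s i i (-1)

lemma HasEdgeTypeOn.mono {i j : ℕ} {sg : ℤ} (h : HasEdgeTypeOn G τ φ s i j sg) (hst : s ⊆ t)
    (hΦ : ∀ u ∈ s, (φ u).natAbs = i ∨ (φ u).natAbs = j → Φ u = φ u) :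
    HasEdgeTypeOn G τ Φ t i j sg := by
  obtain ⟨u, hu, w, hw, hadj, rfl, rfl, hsg⟩ := h
  refine ⟨u, hst hu, w, hst hw, hadj, ?_, ?_, ?_⟩
  · rw [hΦ u hu (.inl rfl)]
  · rw [hΦ w hw (.inr rfl)]
  · rwa [redSign, hΦ u hu (.inl rfl), hΦ w hw (.inr rfl)]

lemma HasEdgeTypeOn.symm (hτ : IsSignature τ) {i j : ℕ} {sg : ℤ}
    (h : HasEdgeTypeOn G τ φ s i j sg) : HasEdgeTypeOn G τ φ s j i sg := by
  obtain ⟨u, hu, w, hw, hadj, hi, hj, hsg⟩ := h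
  refine ⟨w, hw, u, hu, hadj.symm, hj, hi, ?_⟩
  rw [← hsg, redSign, redSign, hτ.1 w u]
  ring

lemma hasEdgeTypeOn_of_conflict (hτ : IsSignature τ) (hv : v ∈ t) (hu : u ∈ t) (hadj : G.Adj v u)
    (hΦv : 0 ≤ Φ v) {c : ℤ} (hc : c = τ v u * Φ u) (hc0 : c ≠ 0) :
    HasEdgeTypeOn G τ Φ t (Φ v).natAbs c.natAbs (isgn c) := by
  have hΦu : Φ u ≠ 0 := by rintro h; rw [h, mul_zero] at hc; exact hc0 hc
  refine ⟨v, hv, u, hu, hadj, rfl, by rw [hc, natAbs_sign_mul (hτ.2 v u)], ?_⟩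
  rw [redSign, isgn_of_nonneg hΦv, hc, isgn_sign_mul (hτ.2 v u) hΦu]
  ring

lemma hasEdgeTypeOn_of_blocked (hτ : IsSignature τ)
    (hblk : ∀ c ∈ colourSet k, ∃ u ∈ s, G.Adj v u ∧ c = τ v u * φ u) (hst : s ⊆ t) (hv : v ∈ t)
    (hΦ : ∀ u ∈ s, φ u ≠ 0 → Φ u = φ u) (hΦv : 0 ≤ Φ v) {j : ℕ} (hj : j ≠ 0) (hjk : j ≤ k / 2)
    {sg : ℤ} (hsg : sg = 1 ∨ sg = -1) : HasEdgeTypeOn G τ Φ t (Φ v).natAbs j sg := by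
  have hc0 : sg * j ≠ 0 := by rcases hsg with rfl | rfl <;> omega
  have hmem : sg * j ∈ colourSet k := by
    rw [mem_colourSet_iff, natAbs_sign_mul hsg]
    exact ⟨by simpa using hjk, fun _ => hc0⟩
  obtain ⟨u, hu, hadj, hc⟩ := hblk _ hmem
  have hφu : φ u ≠ 0 := by rintro h; rw [h, mul_zero] at hc; exact hc0 hc
  rw [← hΦ u hu hφu] at hc
  have h := hasEdgeTypeOn_of_conflict hτ hv (hst hu) hadj hΦv hc hc0
  rwa [natAbs_sign_mul hsg, Int.natAbs_natCast, isgn_sign_mul hsg (by omega),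
    isgn_of_nonneg (by omega), mul_one] at h

lemma IsProperOn.congr (h : IsProperOn G τ φ s) (hΦ : Set.EqOn Φ φ s) : IsProperOn G τ Φ s := by
  intro u hu w hw hadj
  rw [hΦ hu, hΦ hw]
  exact h u hu w hw hadj

lemma IsProperOn.insert (hτ : IsSignature τ) (h : IsProperOn G τ φ s)
    (hv : ∀ w ∈ s, G.Adj v w → φ v ≠ τ v w * φ w) : IsProperOn G τ φ (insert v s) := by
  rintro u (rfl | hu) w (rfl | hw) hadj
  · exact absurd hadj (G.loopless.irrefl _)
  · exact hv w hw hadj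
  · rw [hτ.1, ne_sign_mul_comm (hτ.2 _ _)]
    exact hv u hu hadj.symm
  · exact h u hu w hw hadj

end ColouringOn

section RaiseZeroClass

variable {V : Type*} [DecidableEq V] {G : SimpleGraph V} {τ : V → V → ℤ} {φ : V → ℤ} {s : Set V}
  {u v w : V} {m : ℕ}

/-- The sign `-τ w v` given to a vertex `w` of colour `0` is the one that avoids a conflict
with `v`. -/
def raiseZeroClass (τ : V → V → ℤ) (φ : V → ℤ) (v : V) (m : ℕ) : V → ℤ :=
  Function.update (fun w => if φ w = 0 then -τ w v * m else φ w) v m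

lemma raiseZeroClass_self : raiseZeroClass τ φ v m v = m := Function.update_self ..

lemma raiseZeroClass_of_eq_zero (hw : w ≠ v) (h0 : φ w = 0) :
    raiseZeroClass τ φ v m w = -τ w v * m := by
  simp [raiseZeroClass, hw, h0]

lemma raiseZeroClass_of_ne_zero (hw : w ≠ v) (h0 : φ w ≠ 0) : raiseZeroClass τ φ v m w = φ w := by
  simp [raiseZeroClass, hw, h0]

lemma natAbs_raiseZeroClass_of_eq_zero (hτ : IsSignature τ) (hw : w ≠ v) (h0 : φ w = 0) :
    (raiseZeroClass τ φ v m w).natAbs = m := by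
  rw [raiseZeroClass_of_eq_zero hw h0, natAbs_sign_mul (by rcases hτ.2 w v with h | h <;> simp [h])]
  rfl

lemma isProperOn_raiseZeroClass (hτ : IsSignature τ) (hφ : IsProperOn G τ φ s) (hv : v ∉ s)
    (hsmall : ∀ w ∈ s, (φ w).natAbs < m) :
    IsProperOn G τ (raiseZeroClass τ φ v m) (insert v s) := by
  have hne : ∀ w ∈ s, w ≠ v := fun w hw => ne_of_mem_of_not_mem hw hv
  refine IsProperOn.insert hτ (fun u hu w hw hadj => ?_) fun w hw _ => ?_
  · have hu' := hsmall u hu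
    have hw' := hsmall w hw
    by_cases hu0 : φ u = 0 <;> by_cases hw0 : φ w = 0
    · exact absurd (by rw [hu0, hw0, mul_zero]) (hφ u hu w hw hadj)
    · have := natAbs_raiseZeroClass_of_eq_zero (m := m) hτ (hne u hu) hu0
      rw [raiseZeroClass_of_ne_zero (hne w hw) hw0]
      exact ne_sign_mul_of_natAbs_ne (hτ.2 u w) (by omega)
    · have := natAbs_raiseZeroClass_of_eq_zero (m := m) hτ (hne w hw) hw0
      rw [raiseZeroClass_of_ne_zero (hne u hu) hu0]
      exact ne_sign_mul_of_natAbs_ne (hτ.2 u w) (by omega)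
    · rw [raiseZeroClass_of_ne_zero (hne u hu) hu0, raiseZeroClass_of_ne_zero (hne w hw) hw0]
      exact hφ u hu w hw hadj
  · have := hsmall w hw
    by_cases hw0 : φ w = 0
    · rw [raiseZeroClass_self, raiseZeroClass_of_eq_zero (hne w hw) hw0, ← mul_assoc, mul_neg,
        hτ.mul_symm]
      omega
    · rw [raiseZeroClass_self, raiseZeroClass_of_ne_zero (hne w hw) hw0]
      exact ne_sign_mul_of_natAbs_ne (hτ.2 v w) (by omega)

lemma hasEdgeTypeOn_raiseZeroClass_self (hτ : IsSignature τ) (hv : v ∉ s) (hu : u ∈ s)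
    (hadj : G.Adj v u) (hu0 : φ u = 0) (hm : m ≠ 0) :
    HasEdgeTypeOn G τ (raiseZeroClass τ φ v m) (insert v s) m m (-1) := by
  have hc : -(m : ℤ) = τ v u * raiseZeroClass τ φ v m u := by
    rw [raiseZeroClass_of_eq_zero (ne_of_mem_of_not_mem hu hv) hu0, ← mul_assoc, mul_neg,
      hτ.mul_symm]
    ring
  have h := hasEdgeTypeOn_of_conflict hτ (Set.mem_insert v s) (Set.mem_insert_of_mem v hu)
    hadj (by rw [raiseZeroClass_self]; omega) hc (by omega)
  rwa [raiseZeroClass_self, Int.natAbs_neg, Int.natAbs_natCast, isgn, if_pos (by omega)] at h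

end RaiseZeroClass

namespace IsCompleteColouringOn

variable {V : Type*} {G : SimpleGraph V} {τ : V → V → ℤ} {k : ℕ} {φ : V → ℤ} {s : Set V} {v : V}

lemma extend_of_free [DecidableEq V] (hτ : IsSignature τ)
    (hφ : IsCompleteColouringOn G τ k φ s) (hv : v ∉ s)
    {c : ℤ} (hc : c ∈ colourSet k) (hfree : ∀ u ∈ s, G.Adj v u → c ≠ τ v u * φ u) :
    IsCompleteColouringOn G τ k (Function.update φ v c) (insert v s) := by
  have hΦs : Set.EqOn (Function.update φ v c) φ s := fun u hu =>
    Function.update_of_ne (ne_of_mem_of_not_mem hu hv) c φ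
  have old : ∀ {i j : ℕ} {sg : ℤ}, HasEdgeTypeOn G τ φ s i j sg →
      HasEdgeTypeOn G τ (Function.update φ v c) (insert v s) i j sg := fun h =>
    h.mono (Set.subset_insert v s) fun u hu _ => hΦs hu
  refine ⟨?_, ?_, fun i j hi hj hij sg hsg => old (hφ.pair i j hi hj hij sg hsg),
    fun i hi hik => old (hφ.self i hi hik)⟩
  · rintro u (rfl | hu)
    · rwa [Function.update_self]
    · rw [hΦs hu]; exact hφ.mem_colourSet u hu
  · refine (hφ.isProperOn.congr hΦs).insert hτ fun w hw hadj => ?_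
    rw [Function.update_self, hΦs hw]
    exact hfree w hw hadj

lemma extend_of_blocked_of_even [DecidableEq V] (hτ : IsSignature τ)
    (hφ : IsCompleteColouringOn G τ k φ s) (hv : v ∉ s)
    (hblk : ∀ c ∈ colourSet k, ∃ u ∈ s, G.Adj v u ∧ c = τ v u * φ u)
    (hk : Even k) :
    IsCompleteColouringOn G τ (k + 1) (Function.update φ v 0) (insert v s) := by
  rw [Nat.even_iff] at hk
  set Φ := Function.update φ v 0
  have hΦs : Set.EqOn Φ φ s := fun u hu => Function.update_of_ne (ne_of_mem_of_not_mem hu hv) 0 φ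
  have hΦv : Φ v = 0 := Function.update_self v 0 φ
  have hφ0 : ∀ u ∈ s, φ u ≠ 0 := fun u hu => (mem_colourSet_iff.1 (hφ.mem_colourSet u hu)).2 hk
  have old : ∀ {i j : ℕ} {sg : ℤ}, HasEdgeTypeOn G τ φ s i j sg →
      HasEdgeTypeOn G τ Φ (insert v s) i j sg := fun h =>
    h.mono (Set.subset_insert v s) fun u hu _ => hΦs hu
  have new : ∀ {j : ℕ}, j ≠ 0 → j ≤ k / 2 → ∀ sg : ℤ, sg = 1 ∨ sg = -1 →
      HasEdgeTypeOn G τ Φ (insert v s) 0 j sg := fun hj hjk sg hsg => by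
    simpa [hΦv] using hasEdgeTypeOn_of_blocked hτ hblk (Set.subset_insert v s)
      (Set.mem_insert v s) (fun u hu _ => hΦs hu) hΦv.ge hj hjk hsg
  have hmem : ∀ {i : ℕ}, (i : ℤ) ∈ colourSet (k + 1) → i ≠ 0 → (i : ℤ) ∈ colourSet k := by
    intro i hi hi0
    rw [mem_colourSet_iff] at hi ⊢
    omega
  refine ⟨?_, ?_, fun i j hi hj hij sg hsg => ?_, fun i hi hik => ?_⟩
  · rintro u (rfl | hu)
    · rw [hΦv, mem_colourSet_iff]; omega
    · have := mem_colourSet_iff.1 (hφ.mem_colourSet u hu)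
      rw [hΦs hu, mem_colourSet_iff]; omega
  · refine (hφ.isProperOn.congr hΦs).insert hτ fun w hw _ => ?_
    rw [hΦv, hΦs hw]
    have := hφ0 w hw
    rcases hτ.2 v w with h | h <;> rw [h] <;> omega
  · rcases Nat.eq_zero_or_pos i with rfl | hi0
    · have := mem_colourSet_iff.1 hj
      exact new (Ne.symm hij) (by omega) sg hsg
    rcases Nat.eq_zero_or_pos j with rfl | hj0
    · have := mem_colourSet_iff.1 hi
      exact (new hij (by omega) sg hsg).symm hτ
    exact old (hφ.pair i j (hmem hi hi0.ne') (hmem hj hj0.ne') hij sg hsg)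
  · exact old (hφ.self i hi (hmem hik (by omega)))

lemma extend_of_blocked_of_odd [DecidableEq V] (hτ : IsSignature τ)
    (hφ : IsCompleteColouringOn G τ k φ s) (hv : v ∉ s)
    (hblk : ∀ c ∈ colourSet k, ∃ u ∈ s, G.Adj v u ∧ c = τ v u * φ u) (hk : ¬ Even k) :
    IsCompleteColouringOn G τ (k + 1) (raiseZeroClass τ φ v (k / 2 + 1)) (insert v s) := by
  rw [Nat.not_even_iff] at hk
  set m : ℕ := k / 2 + 1
  have hne : ∀ w ∈ s, w ≠ v := fun w hw => ne_of_mem_of_not_mem hw hv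
  have hsmall : ∀ w ∈ s, (φ w).natAbs ≤ k / 2 := fun w hw =>
    (mem_colourSet_iff.1 (hφ.mem_colourSet w hw)).1
  have old : ∀ {i j : ℕ} {sg : ℤ}, i ≠ 0 → j ≠ 0 → HasEdgeTypeOn G τ φ s i j sg →
      HasEdgeTypeOn G τ (raiseZeroClass τ φ v m) (insert v s) i j sg := fun hi hj h =>
    h.mono (Set.subset_insert v s) fun u hu hij =>
      raiseZeroClass_of_ne_zero (hne u hu) (by rintro h; simp [h] at hij; omega)
  have new : ∀ {j : ℕ}, j ≠ 0 → j ≤ k / 2 → ∀ sg : ℤ, sg = 1 ∨ sg = -1 →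
      HasEdgeTypeOn G τ (raiseZeroClass τ φ v m) (insert v s) m j sg := fun hj hjk sg hsg => by
    simpa [raiseZeroClass_self] using hasEdgeTypeOn_of_blocked hτ hblk (Set.subset_insert v s)
      (Set.mem_insert v s) (fun u hu => raiseZeroClass_of_ne_zero (hne u hu))
      (by rw [raiseZeroClass_self]; omega) hj hjk hsg
  have hmem : ∀ {i : ℕ}, (i : ℤ) ∈ colourSet (k + 1) → i ≠ m → (i : ℤ) ∈ colourSet k ∧ i ≠ 0 := by
    intro i hi him
    rw [mem_colourSet_iff] at hi ⊢
    omega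
  refine ⟨?_, isProperOn_raiseZeroClass hτ hφ.isProperOn hv fun w hw => by
      have := hsmall w hw; omega,
    fun i j hi hj hij sg hsg => ?_, fun i hi hik => ?_⟩
  · rintro u (rfl | hu)
    · rw [raiseZeroClass_self, mem_colourSet_iff]; omega
    · have := hsmall u hu
      by_cases h0 : φ u = 0
      · have := natAbs_raiseZeroClass_of_eq_zero (m := m) hτ (hne u hu) h0
        rw [mem_colourSet_iff]; omega
      · rw [raiseZeroClass_of_ne_zero (hne u hu) h0, mem_colourSet_iff]; omega
  · by_cases him : i = m
    · have := mem_colourSet_iff.1 hj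
      exact him ▸ new (by omega) (by omega) sg hsg
    by_cases hjm : j = m
    · have := mem_colourSet_iff.1 hi
      exact hjm ▸ (new (by omega) (by omega) sg hsg).symm hτ
    obtain ⟨hi', hi0⟩ := hmem hi him
    obtain ⟨hj', hj0⟩ := hmem hj hjm
    exact old hi0 hj0 (hφ.pair i j hi' hj' hij sg hsg)
  · by_cases him : i = m
    · obtain ⟨u, hu, hadj, hc⟩ := hblk 0 (by rw [mem_colourSet_iff]; omega)
      have hu0 : φ u = 0 := by rcases hτ.2 v u with h | h <;> rw [h] at hc <;> omega
      exact him ▸ hasEdgeTypeOn_raiseZeroClass_self hτ hv hu hadj hu0 (by omega)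
    obtain ⟨hi', hi0⟩ := hmem hik him
    exact old hi0 hi0 (hφ.self i hi hi')

lemma exists_extend (hτ : IsSignature τ) (hφ : IsCompleteColouringOn G τ k φ s) (v : V) :
    ∃ k' ≥ k, ∃ Φ, IsCompleteColouringOn G τ k' Φ (insert v s) := by
  classical
  by_cases hv : v ∈ s
  · exact ⟨k, le_rfl, φ, by rwa [Set.insert_eq_of_mem hv]⟩
  by_cases hfree : ∃ c ∈ colourSet k, ∀ u ∈ s, G.Adj v u → c ≠ τ v u * φ u
  · obtain ⟨c, hc, hfree⟩ := hfree
    exact ⟨k, le_rfl, _, hφ.extend_of_free hτ hv hc hfree⟩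
  push Not at hfree
  by_cases hk : Even k
  · exact ⟨k + 1, k.le_succ, _, hφ.extend_of_blocked_of_even hτ hv hfree hk⟩
  · exact ⟨k + 1, k.le_succ, _, hφ.extend_of_blocked_of_odd hτ hv hfree hk⟩

end IsCompleteColouringOn

lemma IsCompleteColouringOn.exists_univ {V : Type*} [Finite V] {G : SimpleGraph V}
    {τ : V → V → ℤ} {k : ℕ} {φ : V → ℤ} {s : Set V} (hτ : IsSignature τ)
    (hφ : IsCompleteColouringOn G τ k φ s) :
    ∃ k' ≥ k, ∃ Φ, IsCompleteColouringOn G τ k' Φ Set.univ := by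
  classical
  have := Fintype.ofFinite V
  suffices ∀ t : Finset V, ∃ k' ≥ k, ∃ Φ, IsCompleteColouringOn G τ k' Φ (s ∪ t) by
    simpa using this Finset.univ
  intro t
  induction t using Finset.induction_on with
  | empty => exact ⟨k, le_rfl, φ, by simpa using hφ⟩
  | insert a t _ ih =>
    obtain ⟨k₁, hk₁, Φ₁, hΦ₁⟩ := ih
    obtain ⟨k₂, hk₂, Φ₂, hΦ₂⟩ := hΦ₁.exists_extend hτ a
    exact ⟨k₂, hk₁.trans hk₂, Φ₂, by rwa [Finset.coe_insert, Set.union_insert]⟩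

section Induce

variable {V : Type*} {G : SimpleGraph V} {σ τ : V → V → ℤ} {k : ℕ} {s : Set V}

lemma hasEdgeTypeOn_univ {φ : V → ℤ} {i j : ℕ} {sg : ℤ} :
    HasEdgeTypeOn G τ φ Set.univ i j sg ↔ HasEdgeType G τ φ i j sg := by
  simp [HasEdgeTypeOn, HasEdgeType]

lemma IsCompleteColouringOn.isCompleteColouring {φ : V → ℤ}
    (h : IsCompleteColouringOn G τ k φ Set.univ) : IsCompleteColouring G τ k φ := by
  refine ⟨⟨fun v => h.mem_colourSet v trivial, fun u w => h.isProperOn u trivial w trivial⟩,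
    fun i j hi hj hij => ?_, fun i hi hik => hasEdgeTypeOn_univ.1 (h.self i hi hik)⟩
  exact ⟨hasEdgeTypeOn_univ.1 (h.pair i j hi hj hij 1 (.inl rfl)),
    hasEdgeTypeOn_univ.1 (h.pair i j hi hj hij (-1) (.inr rfl))⟩

lemma HasEdgeType.hasEdgeTypeOn_of_induce {π : s → s → ℤ} {φ : s → ℤ} {Φ : V → ℤ} {i j : ℕ}
    {sg : ℤ} (h : HasEdgeType (G.induce s) π φ i j sg) (hΦ : ∀ a : s, Φ a = φ a)
    (hτ : ∀ a b : s, τ a b = π a b) : HasEdgeTypeOn G τ Φ s i j sg := by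
  obtain ⟨a, b, hadj, hi, hj, hsg⟩ := h
  refine ⟨a, a.2, b, b.2, hadj, by rwa [hΦ], by rwa [hΦ], ?_⟩
  rwa [redSign, hΦ, hΦ, hτ]

lemma IsCompleteColouring.exists_isCompleteColouringOn_of_induce {π : s → s → ℤ} {φ : s → ℤ}
    (h : IsCompleteColouring (G.induce s) π k φ) (hτ : ∀ a b : s, τ a b = π a b) :
    ∃ Φ, IsCompleteColouringOn G τ k Φ s := by
  classical
  set Φ : V → ℤ := fun u => if hu : u ∈ s then φ ⟨u, hu⟩ else 0
  have hΦ : ∀ a : s, Φ a = φ a := fun a => dif_pos a.2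
  obtain ⟨⟨hmem, hproper⟩, hpair, hself⟩ := h
  refine ⟨Φ, fun u hu => ?_, fun u hu w hw hadj => ?_, fun i j hi hj hij sg hsg => ?_,
    fun i hi hik => (hself i hi hik).hasEdgeTypeOn_of_induce hΦ hτ⟩
  · simpa [Φ, hu] using hmem ⟨u, hu⟩
  · have := hproper ⟨u, hu⟩ ⟨w, hw⟩ hadj
    rwa [← hΦ, ← hΦ, ← hτ] at this
  · rcases hsg with rfl | rfl
    · exact (hpair i j hi hj hij).1.hasEdgeTypeOn_of_induce hΦ hτ
    · exact (hpair i j hi hj hij).2.hasEdgeTypeOn_of_induce hΦ hτ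

lemma SwitchEquiv.exists_extend_of_induce {π : s → s → ℤ}
    (h : SwitchEquiv (fun a b : s => σ a b) π) :
    ∃ τ, SwitchEquiv σ τ ∧ ∀ a b : s, τ a b = π a b := by
  classical
  obtain ⟨t, ht, hπ⟩ := h
  set t' : V → ℤ := fun u => if hu : u ∈ s then t ⟨u, hu⟩ else 1
  have ht' : ∀ a : s, t' a = t a := fun a => dif_pos a.2
  refine ⟨fun u v => t' u * t' v * σ u v, ⟨t', fun u => ?_, fun _ _ => rfl⟩, fun a b => ?_⟩
  · by_cases hu : u ∈ s
    · simpa [t', hu] using ht ⟨u, hu⟩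
    · simp [t', hu]
  · rw [hπ, ← ht', ← ht']

lemma AdmitsComplete.exists_le_of_induce [Finite V] (hσ : IsSignature σ)
    (h : AdmitsComplete (G.induce s) (fun a b => σ a.1 b.1) k) :
    ∃ k' ≥ k, AdmitsComplete G σ k' := by
  obtain ⟨π, -, hπ, φ, hφ⟩ := h
  obtain ⟨τ, hστ, hτπ⟩ := hπ.exists_extend_of_induce
  have hτ := hσ.of_switchEquiv hστ
  obtain ⟨Φ, hΦ⟩ := hφ.exists_isCompleteColouringOn_of_induce hτπ
  obtain ⟨k', hk', Φ', hΦ'⟩ := hΦ.exists_univ hτ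
  exact ⟨k', hk', τ, hτ, hστ, Φ', hΦ'.isCompleteColouring⟩

end Induce

lemma IsCompleteColouring.div_two_le_card {V : Type*} [Fintype V] {G : SimpleGraph V}
    {τ : V → V → ℤ} {k : ℕ} {φ : V → ℤ} (h : IsCompleteColouring G τ k φ) :
    k / 2 ≤ Fintype.card V := by
  classical
  have hsub : Finset.Icc 1 (k / 2) ⊆ Finset.univ.image fun u => (φ u).natAbs := by
    intro i hi
    rw [Finset.mem_Icc] at hi
    obtain ⟨u, -, -, hu, -⟩ := h.2.2 i hi.1 (mem_colourSet_iff.2 (by simp; omega))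
    exact Finset.mem_image.2 ⟨u, Finset.mem_univ u, hu⟩
  calc k / 2 = (Finset.Icc 1 (k / 2)).card := by simp
    _ ≤ _ := Finset.card_le_card hsub
    _ ≤ Fintype.card V := Finset.card_image_le

lemma bddAbove_admitsComplete {V : Type*} [Fintype V] (G : SimpleGraph V) (σ : V → V → ℤ) :
    BddAbove {k | AdmitsComplete G σ k} := by
  refine ⟨2 * Fintype.card V + 1, fun k ⟨_, _, _, _, hφ⟩ => ?_⟩
  have := hφ.div_two_le_card
  omega

/-- If `(H,π)` is an induced signed subgraph of `(G,σ)`, then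
`ψ(H,π) ≤ ψ(G,σ)`. -/
theorem statement9 {V : Type*} [Fintype V] (G : SimpleGraph V) (σ : V → V → ℤ)
    (hσ : IsSignature σ) (s : Set V) :
    psi (G.induce s) (fun a b => σ a.1 b.1) ≤ psi G σ := by
  refine csSup_le' fun k hk => ?_
  obtain ⟨k', hkk', hk'⟩ := AdmitsComplete.exists_le_of_induce hσ hk
  exact hkk'.trans (le_csSup (bddAbove_admitsComplete G σ) hk')
end

section
/- Let (G,σ) be a signed graph. For every edge e ∈ E(G), we have ψ(G,σ) − 2 ≤ ψ(G−e,σ) ≤ ψ(G,σ) + 2, where (G−e,σ) is the signed graph obtained by deleting the edge e and restricting σ. -/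
open SimpleGraph

/-! ### Auxiliary machinery -/

section Aux

variable {V : Type*}

lemma sq_one_of_pm {s : ℤ} (h : s = 1 ∨ s = -1) : s * s = 1 := by
  rcases h with h | h <;> simp [h]

lemma isgn_pm (x : ℤ) : isgn x = 1 ∨ isgn x = -1 := by
  unfold isgn; split <;> simp

lemma isgn_mul_natAbs (x : ℤ) : isgn x * (x.natAbs : ℤ) = x := by
  unfold isgn; split
  · rename_i h
    rw [Int.ofNat_natAbs_of_nonpos (le_of_lt h)]; ring
  · rename_i h
    rw [Int.natAbs_of_nonneg (not_lt.mp h)]; ring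

lemma isgn_natCast (n : ℕ) : isgn (n : ℤ) = 1 := by
  unfold isgn
  rw [if_neg]
  exact not_lt.mpr (Int.natCast_nonneg n)

lemma switchEquiv_refl (σ : V → V → ℤ) : SwitchEquiv σ σ :=
  ⟨fun _ => 1, fun _ => Or.inl rfl, fun u v => by ring⟩

lemma switchEquiv_trans {σ τ ρ : V → V → ℤ} (h1 : SwitchEquiv σ τ)
    (h2 : SwitchEquiv τ ρ) : SwitchEquiv σ ρ := by
  obtain ⟨s, hs, he⟩ := h1
  obtain ⟨t, ht, he'⟩ := h2
  refine ⟨fun v => t v * s v, fun v => ?_, fun u v => ?_⟩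
  · rcases hs v with h | h <;> rcases ht v with h' | h' <;> simp [h, h']
  · rw [he', he]; ring

/-- Reduced colour-value membership. -/
def inVal (k i : ℕ) : Prop := (Even k → i ≠ 0) ∧ i ≤ k / 2

/-- Witness: an edge of the right type inside `D`. -/
def wit (H : SimpleGraph V) (D : Set V) (τ : V → V → ℤ) (α : V → ℕ)
    (i j : ℕ) (s : ℤ) : Prop :=
  ∃ x ∈ D, ∃ y ∈ D, H.Adj x y ∧ α x = i ∧ α y = j ∧ τ x y = s

/-- Reduced complete `k`-state on the vertex subset `D`. -/
def Stt (H : SimpleGraph V) (D : Set V) (k : ℕ) (τ : V → V → ℤ) (α : V → ℕ) : Prop :=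
  IsSignature τ ∧
  (∀ v ∈ D, inVal k (α v)) ∧
  (∀ x ∈ D, ∀ y ∈ D, H.Adj x y → (τ x y = 1 → α x ≠ α y) ∧ ¬(α x = 0 ∧ α y = 0)) ∧
  (∀ i j : ℕ, inVal k i → inVal k j → i ≠ j →
    wit H D τ α i j 1 ∧ wit H D τ α i j (-1)) ∧
  (∀ i : ℕ, 1 ≤ i → inVal k i → wit H D τ α i i (-1))

lemma mem_colourSet_nat (k i : ℕ) : ((i : ℤ) ∈ colourSet k) ↔ inVal k i := by
  unfold colourSet inVal
  by_cases h : Even k <;>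
    simp [h, Set.mem_setOf_eq, Int.natAbs_natCast, Nat.cast_ne_zero]

lemma toState {H : SimpleGraph V} {σ : V → V → ℤ} {k : ℕ}
    (h : AdmitsComplete H σ k) :
    ∃ τ α, SwitchEquiv σ τ ∧ Stt H Set.univ k τ α := by
  obtain ⟨σ', hsig', ⟨s, hs, hσ'⟩, φ, ⟨hrange, hprop⟩, hpairs, hdiag⟩ := h
  refine ⟨redSign σ' φ, fun v => (φ v).natAbs, ?_, ?_, ?_, ?_, ?_, ?_⟩
  · refine ⟨fun v => isgn (φ v) * s v, fun v => ?_, fun u v => ?_⟩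
    · rcases isgn_pm (φ v) with h | h <;> rcases hs v with h' | h' <;> simp [h, h']
    · unfold redSign; rw [hσ']; ring
  · constructor
    · intro u v; unfold redSign; rw [hsig'.1 u v]; ring
    · intro u v
      rcases isgn_pm (φ u) with h | h <;> rcases isgn_pm (φ v) with h' | h' <;>
        rcases hsig'.2 u v with h'' | h'' <;> unfold redSign <;>
          rw [h, h', h''] <;> norm_num
  · intro v _
    have h1 := hrange v
    unfold colourSet at h1
    constructor
    · intro he
      rw [if_pos he] at h1
      exact Int.natAbs_ne_zero.mpr h1.1
    · by_cases he : Even k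
      · rw [if_pos he] at h1; exact h1.2
      · rw [if_neg he] at h1; exact h1
  · intro x _ y _ hadj
    constructor
    · intro hτ heq
      replace heq : (φ x).natAbs = (φ y).natAbs := heq
      apply hprop x y hadj
      have hσxy : σ' x y = isgn (φ x) * isgn (φ y) := by
        have h2 := sq_one_of_pm (isgn_pm (φ x))
        have h3 := sq_one_of_pm (isgn_pm (φ y))
        unfold redSign at hτ
        calc σ' x y = (isgn (φ x) * isgn (φ x)) * ((isgn (φ y) * isgn (φ y)) * σ' x y) := by
              rw [h2, h3]; ring
          _ = isgn (φ x) * isgn (φ y) * (isgn (φ x) * isgn (φ y) * σ' x y) := by ring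
          _ = isgn (φ x) * isgn (φ y) := by rw [hτ]; ring
      rw [hσxy]
      calc φ x = isgn (φ x) * ((φ x).natAbs : ℤ) := (isgn_mul_natAbs _).symm
        _ = isgn (φ x) * ((φ y).natAbs : ℤ) := by rw [heq]
        _ = isgn (φ x) * (isgn (φ y) * isgn (φ y)) * ((φ y).natAbs : ℤ) := by
              rw [sq_one_of_pm (isgn_pm (φ y))]; ring
        _ = isgn (φ x) * isgn (φ y) * φ y := by
              rw [mul_assoc, mul_assoc, isgn_mul_natAbs]; ring
    · rintro ⟨hx0, hy0⟩
      replace hx0 : (φ x).natAbs = 0 := hx0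
      replace hy0 : (φ y).natAbs = 0 := hy0
      apply hprop x y hadj
      rw [Int.natAbs_eq_zero] at hx0 hy0
      rw [hx0, hy0]; ring
  · intro i j hi hj hij
    have := hpairs i j ((mem_colourSet_nat k i).mpr hi) ((mem_colourSet_nat k j).mpr hj) hij
    constructor
    · obtain ⟨u, v, h1, h2, h3, h4⟩ := this.1
      exact ⟨u, Set.mem_univ u, v, Set.mem_univ v, h1, h2, h3, h4⟩
    · obtain ⟨u, v, h1, h2, h3, h4⟩ := this.2
      exact ⟨u, Set.mem_univ u, v, Set.mem_univ v, h1, h2, h3, h4⟩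
  · intro i hi1 hi
    obtain ⟨u, v, h1, h2, h3, h4⟩ := hdiag i hi1 ((mem_colourSet_nat k i).mpr hi)
    exact ⟨u, Set.mem_univ u, v, Set.mem_univ v, h1, h2, h3, h4⟩

lemma fromState {H : SimpleGraph V} {σ τ : V → V → ℤ} {α : V → ℕ} {k : ℕ}
    (hsw : SwitchEquiv σ τ) (h : Stt H Set.univ k τ α) : AdmitsComplete H σ k := by
  obtain ⟨hsig, hrange, hprop, hpairs, hdiag⟩ := h
  have hred : ∀ u v : V, redSign τ (fun v => ((α v : ℤ))) u v = τ u v := by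
    intro u v
    unfold redSign
    rw [isgn_natCast, isgn_natCast]; ring
  refine ⟨τ, hsig, hsw, fun v => (α v : ℤ), ⟨?_, ?_⟩, ?_, ?_⟩
  · intro v
    exact (mem_colourSet_nat k (α v)).mpr (hrange v (Set.mem_univ v))
  · intro u v hadj heq
    have hp := hprop u (Set.mem_univ u) v (Set.mem_univ v) hadj
    rcases hsig.2 u v with h1 | h1
    · rw [h1, one_mul] at heq
      exact hp.1 h1 (Nat.cast_injective heq)
    · rw [h1] at heq
      replace heq : ((α u : ℤ)) = -1 * (α v : ℤ) := heq
      have hu : (0:ℤ) ≤ (α u : ℤ) := Int.natCast_nonneg _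
      have hv : (0:ℤ) ≤ (α v : ℤ) := Int.natCast_nonneg _
      have : (α u : ℤ) = 0 ∧ (α v : ℤ) = 0 := by constructor <;> omega
      exact hp.2 ⟨Nat.cast_injective this.1, Nat.cast_injective this.2⟩
  · intro i j hi hj hij
    have := hpairs i j ((mem_colourSet_nat k i).mp hi) ((mem_colourSet_nat k j).mp hj) hij
    constructor
    · obtain ⟨x, _, y, _, h1, h2, h3, h4⟩ := this.1
      exact ⟨x, y, h1, by simpa using h2, by simpa using h3, by rw [hred]; exact h4⟩
    · obtain ⟨x, _, y, _, h1, h2, h3, h4⟩ := this.2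
      exact ⟨x, y, h1, by simpa using h2, by simpa using h3, by rw [hred]; exact h4⟩
  · intro i hi1 hi
    obtain ⟨x, _, y, _, h1, h2, h3, h4⟩ := hdiag i hi1 ((mem_colourSet_nat k i).mp hi)
    exact ⟨x, y, h1, by simpa using h2, by simpa using h3, by rw [hred]; exact h4⟩

end Aux
section StepLemma

variable {V : Type*}

/-- Transport a state along a signature agreeing on `D`. -/
lemma stt_congr {H : SimpleGraph V} {D : Set V} {k : ℕ} {τ τ' : V → V → ℤ} {α : V → ℕ}
    (hsig' : IsSignature τ') (hagree : ∀ x ∈ D, ∀ y ∈ D, τ' x y = τ x y)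
    (h : Stt H D k τ α) : Stt H D k τ' α := by
  obtain ⟨hsig, hrange, hprop, hpairs, hdiag⟩ := h
  refine ⟨hsig', hrange, ?_, ?_, ?_⟩
  · intro x hx y hy hadj
    rw [hagree x hx y hy]
    exact hprop x hx y hy hadj
  · intro i j hi hj hij
    obtain ⟨⟨x, hx, y, hy, h1, h2, h3, h4⟩, ⟨x', hx', y', hy', h1', h2', h3', h4'⟩⟩ :=
      hpairs i j hi hj hij
    exact ⟨⟨x, hx, y, hy, h1, h2, h3, by rw [hagree x hx y hy]; exact h4⟩,
      ⟨x', hx', y', hy', h1', h2', h3', by rw [hagree x' hx' y' hy']; exact h4'⟩⟩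
  · intro i hi1 hi
    obtain ⟨x, hx, y, hy, h1, h2, h3, h4⟩ := hdiag i hi1 hi
    exact ⟨x, hx, y, hy, h1, h2, h3, by rw [hagree x hx y hy]; exact h4⟩

/-- Case A of the placement: all of `u`'s edges towards class `β` are negative;
then `u` can join class `β`. -/
lemma stepA {H : SimpleGraph V} {D : Set V} {u : V} [DecidableEq V] (hu : u ∉ D)
    {k : ℕ} {τ : V → V → ℤ} {α : V → ℕ} {β : ℕ}
    (h : Stt H D k τ α) (hβ1 : 1 ≤ β) (hβv : inVal k β)
    (hno : ∀ w ∈ D, H.Adj u w → α w = β → τ u w = -1) :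
    Stt H (insert u D) k τ (fun v => if v = u then β else α v) := by
  obtain ⟨hsig, hrange, hprop, hpairs, hdiag⟩ := h
  have hne : ∀ w ∈ D, w ≠ u := fun w hw he => hu (he ▸ hw)
  set α' : V → ℕ := fun v => if v = u then β else α v with hα'
  have hα'u : α' u = β := by simp [hα']
  have hα'w : ∀ w, w ≠ u → α' w = α w := by intro w hw; simp [hα', hw]
  have wlift : ∀ i j s, wit H D τ α i j s → wit H (Insert.insert u D) τ α' i j s := by
    rintro i j s ⟨x, hx, y, hy, h1, h2, h3, h4⟩
    exact ⟨x, Set.mem_insert_of_mem _ hx, y, Set.mem_insert_of_mem _ hy, h1,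
      by rw [hα'w x (hne x hx)]; exact h2, by rw [hα'w y (hne y hy)]; exact h3, h4⟩
  refine ⟨hsig, ?_, ?_, ?_, ?_⟩
  · intro v hv
    rcases Set.mem_insert_iff.mp hv with rfl | hvD
    · rw [hα'u]; exact hβv
    · rw [hα'w v (hne v hvD)]; exact hrange v hvD
  · intro x hx y hy hadj
    rcases Set.mem_insert_iff.mp hx with rfl | hxD
    · rcases Set.mem_insert_iff.mp hy with rfl | hyD
      · exact absurd hadj (H.irrefl)
      · rw [hα'u, hα'w y (hne y hyD)]
        constructor
        · intro ht heq
          have := hno y hyD hadj heq.symm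
          rw [this] at ht; norm_num at ht
        · rintro ⟨h0, _⟩; omega
    · rcases Set.mem_insert_iff.mp hy with rfl | hyD
      · rw [hα'u, hα'w x (hne x hxD)]
        constructor
        · intro ht heq
          have := hno x hxD hadj.symm heq
          rw [hsig.1 x y, this] at ht; norm_num at ht
        · rintro ⟨_, h0⟩; omega
      · rw [hα'w x (hne x hxD), hα'w y (hne y hyD)]
        exact hprop x hxD y hyD hadj
  · intro i j hi hj hij
    obtain ⟨w1, w2⟩ := hpairs i j hi hj hij
    exact ⟨wlift _ _ _ w1, wlift _ _ _ w2⟩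
  · intro i hi1 hi
    exact wlift _ _ _ (hdiag i hi1 hi)

/-- The placement lemma: a vertex can always be added to a complete state on a
subset, keeping the parameter at least as large. -/
lemma step (H : SimpleGraph V) {D : Set V} {u : V} (hu : u ∉ D)
    {k : ℕ} {τ : V → V → ℤ} {α : V → ℕ} (h : Stt H D k τ α) :
    ∃ k' τ' α', k ≤ k' ∧ SwitchEquiv τ τ' ∧ Stt H (insert u D) k' τ' α' := by
  classical
  have hsig := h.1
  have hne : ∀ w ∈ D, w ≠ u := fun w hw he => hu (he ▸ hw)
  by_cases hA : ∃ β : ℕ, 1 ≤ β ∧ inVal k β ∧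
      ((∀ w ∈ D, H.Adj u w → α w = β → τ u w ≠ 1) ∨
       (∀ w ∈ D, H.Adj u w → α w = β → τ u w ≠ -1))
  · -- CASE A : u can join class β
    obtain ⟨β, hβ1, hβv, hcase⟩ := hA
    rcases hcase with hcase | hcase
    · -- all edges to class β are -1 already
      refine ⟨k, τ, _, le_refl k, switchEquiv_refl τ, stepA hu h hβ1 hβv ?_⟩
      intro w hw hadj hval
      rcases hsig.2 u w with h1 | h1
      · exact absurd h1 (hcase w hw hadj hval)
      · exact h1
    · -- all edges to class β are +1 : switch u
      set sw : V → ℤ := fun x => if x = u then -1 else 1 with hsw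
      have hswpm : ∀ x, sw x = 1 ∨ sw x = -1 := by
        intro x; by_cases hx : x = u <;> simp [hsw, hx]
      set τ' : V → V → ℤ := fun x y => sw x * sw y * τ x y with hτ'
      have hagree : ∀ x ∈ D, ∀ y ∈ D, τ' x y = τ x y := by
        intro x hx y hy
        simp only [hτ', hsw, if_neg (hne x hx), if_neg (hne y hy)]; ring
      have hsig' : IsSignature τ' := by
        constructor
        · intro x y; simp only [hτ']; rw [hsig.1 x y]; ring
        · intro x y
          rcases hswpm x with h1 | h1 <;> rcases hswpm y with h2 | h2 <;>
            rcases hsig.2 x y with h3 | h3 <;> simp [hτ', h1, h2, h3]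
      refine ⟨k, τ', _, le_refl k, ⟨sw, hswpm, fun x y => rfl⟩,
        stepA hu (stt_congr hsig' hagree h) hβ1 hβv ?_⟩
      intro w hw hadj hval
      have h1 : τ u w = 1 := by
        rcases hsig.2 u w with h1 | h1
        · exact h1
        · exact absurd h1 (hcase w hw hadj hval)
      simp [hτ', hsw, hne w hw, h1]
  · -- u is stuck : both signs to every class
    push_neg at hA
    obtain ⟨hsig0, hrange, hprop, hpairs, hdiag⟩ := h
    by_cases hek : Even k
    · -- CASE D : create a new zero class {u}, k' = k+1
      have hodd' : ¬ Even (k + 1) := by simp [Nat.even_add_one, hek]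
      have hk2 : (k + 1) / 2 = k / 2 := by
        have := Nat.even_iff.mp hek; omega
      have hDnz : ∀ w ∈ D, α w ≠ 0 := fun w hw => (hrange w hw).1 hek
      set α' : V → ℕ := fun v => if v = u then 0 else α v with hα'
      have hα'u : α' u = 0 := by simp [hα']
      have hα'w : ∀ w, w ≠ u → α' w = α w := by intro w hw; simp [hα', hw]
      have wlift : ∀ i j s, wit H D τ α i j s → wit H (Insert.insert u D) τ α' i j s := by
        rintro i j s ⟨x, hx, y, hy, h1, h2, h3, h4⟩
        exact ⟨x, Set.mem_insert_of_mem _ hx, y, Set.mem_insert_of_mem _ hy, h1,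
          by rw [hα'w x (hne x hx)]; exact h2, by rw [hα'w y (hne y hy)]; exact h3, h4⟩
      refine ⟨k + 1, τ, α', by omega, switchEquiv_refl τ, hsig, ?_, ?_, ?_, ?_⟩
      · intro v hv
        rcases Set.mem_insert_iff.mp hv with rfl | hvD
        · exact ⟨fun hc => absurd hc hodd', by rw [hα'u]; omega⟩
        · refine ⟨fun hc => absurd hc hodd', ?_⟩
          rw [hα'w v (hne v hvD), hk2]
          exact (hrange v hvD).2
      · intro x hx y hy hadj
        rcases Set.mem_insert_iff.mp hx with rfl | hxD
        · rcases Set.mem_insert_iff.mp hy with rfl | hyD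
          · exact absurd hadj H.irrefl
          · rw [hα'u, hα'w y (hne y hyD)]
            exact ⟨fun _ heq => hDnz y hyD heq.symm, fun hp => hDnz y hyD hp.2⟩
        · rcases Set.mem_insert_iff.mp hy with rfl | hyD
          · rw [hα'u, hα'w x (hne x hxD)]
            exact ⟨fun _ heq => hDnz x hxD heq, fun hp => hDnz x hxD hp.1⟩
          · rw [hα'w x (hne x hxD), hα'w y (hne y hyD)]
            exact hprop x hxD y hyD hadj
      · intro i j hi hj hij
        by_cases hi0 : i = 0
        · subst hi0
          have hj0 : j ≠ 0 := fun hc => hij (hc ▸ rfl)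
          have hjv : inVal k j := ⟨fun _ => hj0, by rw [← hk2]; exact hj.2⟩
          obtain ⟨⟨w1, hw1, ha1, hv1, ht1⟩, ⟨w2, hw2, ha2, hv2, ht2⟩⟩ :=
            hA j (by omega) hjv
          constructor
          · exact ⟨u, Set.mem_insert u D, w1, Set.mem_insert_of_mem _ hw1, ha1,
              hα'u, by rw [hα'w w1 (hne w1 hw1)]; exact hv1, ht1⟩
          · exact ⟨u, Set.mem_insert u D, w2, Set.mem_insert_of_mem _ hw2, ha2,
              hα'u, by rw [hα'w w2 (hne w2 hw2)]; exact hv2, ht2⟩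
        · by_cases hj0 : j = 0
          · subst hj0
            have hiv : inVal k i := ⟨fun _ => hi0, by rw [← hk2]; exact hi.2⟩
            obtain ⟨⟨w1, hw1, ha1, hv1, ht1⟩, ⟨w2, hw2, ha2, hv2, ht2⟩⟩ :=
              hA i (by omega) hiv
            constructor
            · exact ⟨w1, Set.mem_insert_of_mem _ hw1, u, Set.mem_insert u D, ha1.symm,
                by rw [hα'w w1 (hne w1 hw1)]; exact hv1, hα'u,
                by rw [hsig.1]; exact ht1⟩
            · exact ⟨w2, Set.mem_insert_of_mem _ hw2, u, Set.mem_insert u D, ha2.symm,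
                by rw [hα'w w2 (hne w2 hw2)]; exact hv2, hα'u,
                by rw [hsig.1]; exact ht2⟩
          · have hiv : inVal k i := ⟨fun _ => hi0, by rw [← hk2]; exact hi.2⟩
            have hjv : inVal k j := ⟨fun _ => hj0, by rw [← hk2]; exact hj.2⟩
            obtain ⟨w1, w2⟩ := hpairs i j hiv hjv hij
            exact ⟨wlift _ _ _ w1, wlift _ _ _ w2⟩
      · intro i hi1 hi
        have hiv : inVal k i := ⟨fun _ => by omega, by rw [← hk2]; exact hi.2⟩
        exact wlift _ _ _ (hdiag i hi1 hiv)
    · -- k odd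
      by_cases hB : ∀ w ∈ D, H.Adj u w → α w ≠ 0
      · -- CASE B : u joins the zero class
        set α' : V → ℕ := fun v => if v = u then 0 else α v with hα'
        have hα'u : α' u = 0 := by simp [hα']
        have hα'w : ∀ w, w ≠ u → α' w = α w := by intro w hw; simp [hα', hw]
        have wlift : ∀ i j s, wit H D τ α i j s → wit H (Insert.insert u D) τ α' i j s := by
          rintro i j s ⟨x, hx, y, hy, h1, h2, h3, h4⟩
          exact ⟨x, Set.mem_insert_of_mem _ hx, y, Set.mem_insert_of_mem _ hy, h1,
            by rw [hα'w x (hne x hx)]; exact h2, by rw [hα'w y (hne y hy)]; exact h3, h4⟩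
        refine ⟨k, τ, α', le_refl k, switchEquiv_refl τ, hsig, ?_, ?_, ?_, ?_⟩
        · intro v hv
          rcases Set.mem_insert_iff.mp hv with rfl | hvD
          · exact ⟨fun hc => absurd hc hek, by rw [hα'u]; omega⟩
          · rw [hα'w v (hne v hvD)]; exact hrange v hvD
        · intro x hx y hy hadj
          rcases Set.mem_insert_iff.mp hx with rfl | hxD
          · rcases Set.mem_insert_iff.mp hy with rfl | hyD
            · exact absurd hadj H.irrefl
            · rw [hα'u, hα'w y (hne y hyD)]
              exact ⟨fun _ heq => hB y hyD hadj heq.symm, fun hp => hB y hyD hadj hp.2⟩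
          · rcases Set.mem_insert_iff.mp hy with rfl | hyD
            · rw [hα'u, hα'w x (hne x hxD)]
              exact ⟨fun _ heq => hB x hxD hadj.symm heq, fun hp => hB x hxD hadj.symm hp.1⟩
            · rw [hα'w x (hne x hxD), hα'w y (hne y hyD)]
              exact hprop x hxD y hyD hadj
        · intro i j hi hj hij
          obtain ⟨w1, w2⟩ := hpairs i j hi hj hij
          exact ⟨wlift _ _ _ w1, wlift _ _ _ w2⟩
        · intro i hi1 hi
          exact wlift _ _ _ (hdiag i hi1 hi)
      · -- CASE C : merge u with the zero class into a new top class, k' = k+1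
        push_neg at hB
        obtain ⟨z, hzD, hzadj, hz0⟩ := hB
        set n := k / 2 with hn
        have hk2 : (k + 1) / 2 = n + 1 := by
          have := Nat.even_iff.not.mp hek; omega
        have heven' : Even (k + 1) := Nat.even_add_one.mpr hek
        set sw : V → ℤ := fun x => if x ∈ D ∧ α x = 0 ∧ H.Adj u x ∧ τ u x = 1 then -1 else 1
          with hsw
        have hswpm : ∀ x, sw x = 1 ∨ sw x = -1 := by
          intro x
          by_cases hx : x ∈ D ∧ α x = 0 ∧ H.Adj u x ∧ τ u x = 1 <;> simp [hsw, hx]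
        set τ' : V → V → ℤ := fun x y => sw x * sw y * τ x y with hτ'
        have hsig' : IsSignature τ' := by
          constructor
          · intro x y
            show sw x * sw y * τ x y = sw y * sw x * τ y x
            rw [hsig.1 x y]; ring
          · intro x y
            rcases hswpm x with h1 | h1 <;> rcases hswpm y with h2 | h2 <;>
              rcases hsig.2 x y with h3 | h3 <;> simp [hτ', h1, h2, h3]
        have hswu : sw u = 1 := by
          rw [hsw]; exact if_neg (by rintro ⟨hD, _⟩; exact hu hD)
        have hswnz : ∀ w, α w ≠ 0 → sw w = 1 := by
          intro w hw; rw [hsw]; exact if_neg (by rintro ⟨_, h0, _⟩; exact hw h0)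
        have hτ'nz : ∀ x y, α x ≠ 0 → α y ≠ 0 → τ' x y = τ x y := by
          intro x y hx hy
          show sw x * sw y * τ x y = τ x y
          rw [hswnz x hx, hswnz y hy]; ring
        have hτ'u0 : ∀ w ∈ D, H.Adj u w → α w = 0 → τ' u w = -1 := by
          intro w hw hadj h0
          rcases hsig.2 u w with h1 | h1
          · have hsww : sw w = -1 := by rw [hsw]; exact if_pos ⟨hw, h0, hadj, h1⟩
            show sw u * sw w * τ u w = -1
            rw [hswu, hsww, h1]; ring
          · have hsww : sw w = 1 := by
              rw [hsw]
              exact if_neg (by rintro ⟨_, _, _, hc⟩; rw [hc] at h1; norm_num at h1)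
            show sw u * sw w * τ u w = -1
            rw [hswu, hsww, h1]; ring
        set α' : V → ℕ := fun v => if v = u ∨ α v = 0 then n + 1 else α v with hα'
        have hα'u : α' u = n + 1 := by simp [hα']
        have hα'z : ∀ w, α w = 0 → α' w = n + 1 := by
          intro w hw; simp [hα', hw]
        have hα'nz : ∀ w, w ≠ u → α w ≠ 0 → α' w = α w := by
          intro w hw hw0; rw [hα']
          exact if_neg (by rintro (h | h) <;> [exact hw h; exact hw0 h])
        have wlift : ∀ a b s, a ≠ 0 → b ≠ 0 → wit H D τ α a b s →
            wit H (Insert.insert u D) τ' α' a b s := by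
          rintro a b s ha hb ⟨x, hx, y, hy, h1, h2, h3, h4⟩
          exact ⟨x, Set.mem_insert_of_mem _ hx, y, Set.mem_insert_of_mem _ hy, h1,
            by rw [hα'nz x (hne x hx) (h2 ▸ ha)]; exact h2,
            by rw [hα'nz y (hne y hy) (h3 ▸ hb)]; exact h3,
            by rw [hτ'nz x y (h2 ▸ ha) (h3 ▸ hb)]; exact h4⟩
        have mkwit : ∀ a s, 1 ≤ a → (∃ w ∈ D, H.Adj u w ∧ α w = a ∧ τ u w = s) →
            wit H (Insert.insert u D) τ' α' (n+1) a s ∧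
            wit H (Insert.insert u D) τ' α' a (n+1) s := by
          rintro a s ha1 ⟨w, hw, hadj, hval, ht⟩
          have hw0 : α w ≠ 0 := by omega
          have ht' : τ' u w = s := by
            show sw u * sw w * τ u w = s
            rw [hswu, hswnz w hw0, ht]; ring
          constructor
          · exact ⟨u, Set.mem_insert u D, w, Set.mem_insert_of_mem _ hw, hadj,
              hα'u, by rw [hα'nz w (hne w hw) hw0]; exact hval, ht'⟩
          · exact ⟨w, Set.mem_insert_of_mem _ hw, u, Set.mem_insert u D, hadj.symm,
              by rw [hα'nz w (hne w hw) hw0]; exact hval, hα'u,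
              by rw [hsig'.1 w u]; exact ht'⟩
        refine ⟨k + 1, τ', α', by omega, ⟨sw, hswpm, fun x y => rfl⟩, hsig', ?_, ?_, ?_, ?_⟩
        · -- range
          intro v hv
          by_cases hcase : v = u ∨ α v = 0
          · have : α' v = n + 1 := by rw [hα']; exact if_pos hcase
            rw [this]
            exact ⟨fun _ => by omega, by rw [hk2]⟩
          · push_neg at hcase
            rw [hα'nz v hcase.1 hcase.2]
            rcases Set.mem_insert_iff.mp hv with rfl | hvD
            · exact absurd rfl hcase.1
            · exact ⟨fun _ => hcase.2, by rw [hk2]; have := (hrange v hvD).2; omega⟩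
        · -- proper
          intro x hx y hy hadj
          rcases Set.mem_insert_iff.mp hx with rfl | hxD
          · rcases Set.mem_insert_iff.mp hy with rfl | hyD
            · exact absurd hadj H.irrefl
            · by_cases hy0 : α y = 0
              · rw [hα'u, hα'z y hy0]
                have := hτ'u0 y hyD hadj hy0
                exact ⟨fun ht => by rw [this] at ht; norm_num at ht, fun hp => by omega⟩
              · rw [hα'u, hα'nz y (hne y hyD) hy0]
                have := (hrange y hyD).2
                exact ⟨fun _ heq => by omega, fun hp => by omega⟩
          · rcases Set.mem_insert_iff.mp hy with rfl | hyD
            · by_cases hx0 : α x = 0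
              · rw [hα'u, hα'z x hx0]
                have h5 : τ' x y = -1 := by
                  rw [hsig'.1 x y]; exact hτ'u0 x hxD hadj.symm hx0
                exact ⟨fun ht => by rw [h5] at ht; norm_num at ht, fun hp => by omega⟩
              · rw [hα'u, hα'nz x (hne x hxD) hx0]
                have := (hrange x hxD).2
                exact ⟨fun _ heq => by omega, fun hp => by omega⟩
            · by_cases hx0 : α x = 0 <;> by_cases hy0 : α y = 0
              · exact ((hprop x hxD y hyD hadj).2 ⟨hx0, hy0⟩).elim
              · rw [hα'z x hx0, hα'nz y (hne y hyD) hy0]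
                have := (hrange y hyD).2
                exact ⟨fun _ heq => by omega, fun hp => by omega⟩
              · rw [hα'z y hy0, hα'nz x (hne x hxD) hx0]
                have := (hrange x hxD).2
                exact ⟨fun _ heq => by omega, fun hp => by omega⟩
              · rw [hα'nz x (hne x hxD) hx0, hα'nz y (hne y hyD) hy0,
                  hτ'nz x y hx0 hy0]
                exact hprop x hxD y hyD hadj
        · -- pairs
          intro i j hi hj hij
          have hi0 : i ≠ 0 := hi.1 heven'
          have hj0 : j ≠ 0 := hj.1 heven'
          have hi2 := hi.2; rw [hk2] at hi2
          have hj2 := hj.2; rw [hk2] at hj2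
          rcases Nat.lt_or_ge i (n+1) with hilt | hige
          · rcases Nat.lt_or_ge j (n+1) with hjlt | hjge
            · have hiv : inVal k i := ⟨fun hc => absurd hc hek, by omega⟩
              have hjv : inVal k j := ⟨fun hc => absurd hc hek, by omega⟩
              obtain ⟨w1, w2⟩ := hpairs i j hiv hjv hij
              exact ⟨wlift _ _ _ hi0 hj0 w1, wlift _ _ _ hi0 hj0 w2⟩
            · have hj' : j = n + 1 := by omega
              subst hj'
              have hiv : inVal k i := ⟨fun hc => absurd hc hek, by omega⟩
              obtain ⟨he1, he2⟩ := hA i (by omega) hiv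
              exact ⟨(mkwit i 1 (by omega) he1).2, (mkwit i (-1) (by omega) he2).2⟩
          · have hi' : i = n + 1 := by omega
            subst hi'
            have hj' : j ≤ n := by omega
            have hjv : inVal k j := ⟨fun hc => absurd hc hek, by omega⟩
            obtain ⟨he1, he2⟩ := hA j (by omega) hjv
            exact ⟨(mkwit j 1 (by omega) he1).1, (mkwit j (-1) (by omega) he2).1⟩
        · -- diag
          intro i hi1 hi
          have hi2 := hi.2; rw [hk2] at hi2
          rcases Nat.lt_or_ge i (n+1) with hlt | hge
          · have hiv : inVal k i := ⟨fun hc => absurd hc hek, by omega⟩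
            exact wlift _ _ _ (by omega) (by omega) (hdiag i hi1 hiv)
          · have hi' : i = n + 1 := by omega
            subst hi'
            exact ⟨u, Set.mem_insert u D, z, Set.mem_insert_of_mem _ hzD, hzadj,
              hα'u, hα'z z hz0, hτ'u0 z hzD hzadj hz0⟩

end StepLemma
section Rest

variable {V : Type*}

/-- Iterate the placement lemma to colour all vertices. -/
lemma extend [Fintype V] [DecidableEq V] (H : SimpleGraph V) (σ : V → V → ℤ) :
    ∀ (m : ℕ) (D : Finset V) (k : ℕ) (τ : V → V → ℤ) (α : V → ℕ),
      (Finset.univ \ D).card ≤ m → SwitchEquiv σ τ → Stt H ↑D k τ α →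
      ∃ k' τ' α', k ≤ k' ∧ SwitchEquiv σ τ' ∧ Stt H Set.univ k' τ' α' := by
  intro m
  induction m with
  | zero =>
    intro D k τ α hcard hsw hst
    have hemp : Finset.univ \ D = ∅ := Finset.card_eq_zero.mp (Nat.le_zero.mp hcard)
    have hD : D = Finset.univ := by
      apply Finset.eq_univ_iff_forall.mpr
      intro x
      by_contra hc
      have hmem : x ∈ Finset.univ \ D := Finset.mem_sdiff.mpr ⟨Finset.mem_univ x, hc⟩
      rw [hemp] at hmem
      exact absurd hmem (Finset.notMem_empty x)
    subst hD
    rw [Finset.coe_univ] at hst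
    exact ⟨k, τ, α, le_refl k, hsw, hst⟩
  | succ m ih =>
    intro D k τ α hcard hsw hst
    by_cases hD : D = Finset.univ
    · subst hD
      rw [Finset.coe_univ] at hst
      exact ⟨k, τ, α, le_refl k, hsw, hst⟩
    · have hne : (Finset.univ \ D).Nonempty := by
        rw [Finset.sdiff_nonempty]
        intro hc
        exact hD (le_antisymm (Finset.subset_univ D) hc |>.symm ▸ rfl)
      obtain ⟨u, hu⟩ := hne
      have huD : u ∉ D := (Finset.mem_sdiff.mp hu).2
      obtain ⟨k₁, τ₁, α₁, hk₁, hsw₁, hst₁⟩ := step H (by simpa using huD) hst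
      rw [← Finset.coe_insert] at hst₁
      have hcard' : (Finset.univ \ insert u D).card ≤ m := by
        have h1 : Finset.univ \ insert u D = (Finset.univ \ D).erase u := by
          ext x
          simp only [Finset.mem_sdiff, Finset.mem_insert, Finset.mem_erase,
            Finset.mem_univ, true_and]
          tauto
        rw [h1, Finset.card_erase_of_mem hu]
        omega
      obtain ⟨k', τ', α', hk', hsw', hst'⟩ :=
        ih (insert u D) k₁ τ₁ α₁ hcard' (switchEquiv_trans hsw hsw₁) hst₁
      exact ⟨k', τ', α', le_trans hk₁ hk', hsw', hst'⟩

/-- Removing the whole colour class of the vertex `a` from a complete `k`-state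
gives a complete state with parameter at least `k - 2`, valid in any graph that
agrees with the original one outside `a`. -/
lemma removeClass (H1 H2 : SimpleGraph V) (a : V)
    (hAg : ∀ u v : V, u ≠ a → v ≠ a → (H1.Adj u v ↔ H2.Adj u v))
    {k : ℕ} {τ : V → V → ℤ} {α : V → ℕ} (hk : 3 ≤ k) (h : Stt H1 Set.univ k τ α) :
    ∃ k₀ α₀, k ≤ k₀ + 2 ∧ Stt H2 {v | α v ≠ α a} k₀ τ α₀ := by
  obtain ⟨hsig, hrange, hprop, hpairs, hdiag⟩ := h
  set n := k / 2 with hn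
  have hca : inVal k (α a) := hrange a (Set.mem_univ a)
  have hn1 : 1 ≤ n := by omega
  have hmem : ∀ v : V, α v ≠ α a → v ∈ {v | α v ≠ α a} := fun v hv => hv
  have hnea : ∀ v : V, α v ≠ α a → v ≠ a := fun v hv he => hv (he ▸ rfl)
  by_cases hc0 : α a = 0
  · -- the zero class is removed : k₀ = k - 1
    have hodd : ¬ Even k := fun he => (hca.1 he) hc0
    have hk2 : (k - 1) / 2 = k / 2 := by
      have := Nat.even_iff.not.mp hodd; omega
    have heven : Even (k - 1) := by
      rw [Nat.even_iff]
      have := Nat.even_iff.not.mp hodd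
      omega
    refine ⟨k - 1, α, by omega, hsig, ?_, ?_, ?_, ?_⟩
    · intro v hv
      have hv' : α v ≠ 0 := by rw [hc0] at hv; exact hv
      exact ⟨fun _ => hv', by rw [hk2]; exact (hrange v (Set.mem_univ v)).2⟩
    · intro x hx y hy hadj
      have hadj1 : H1.Adj x y :=
        (hAg x y (hnea x hx) (hnea y hy)).mpr hadj
      exact hprop x (Set.mem_univ x) y (Set.mem_univ y) hadj1
    · intro i j hi hj hij
      have hiv : inVal k i := ⟨fun he => absurd he hodd, by rw [← hk2]; exact hi.2⟩
      have hjv : inVal k j := ⟨fun he => absurd he hodd, by rw [← hk2]; exact hj.2⟩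
      have hi0 : i ≠ 0 := hi.1 heven
      have hj0 : j ≠ 0 := hj.1 heven
      obtain ⟨⟨x, _, y, _, h1, h2, h3, h4⟩, ⟨x', _, y', _, h1', h2', h3', h4'⟩⟩ :=
        hpairs i j hiv hjv hij
      have hx : α x ≠ α a := by rw [hc0, h2]; exact hi0
      have hy : α y ≠ α a := by rw [hc0, h3]; exact hj0
      have hx' : α x' ≠ α a := by rw [hc0, h2']; exact hi0
      have hy' : α y' ≠ α a := by rw [hc0, h3']; exact hj0
      exact ⟨⟨x, hx, y, hy, (hAg x y (hnea x hx) (hnea y hy)).mp h1, h2, h3, h4⟩,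
        ⟨x', hx', y', hy', (hAg x' y' (hnea x' hx') (hnea y' hy')).mp h1', h2', h3', h4'⟩⟩
    · intro i hi1 hi
      have hiv : inVal k i := ⟨fun he => absurd he hodd, by rw [← hk2]; exact hi.2⟩
      obtain ⟨x, _, y, _, h1, h2, h3, h4⟩ := hdiag i hi1 hiv
      have hx : α x ≠ α a := by rw [hc0, h2]; omega
      have hy : α y ≠ α a := by rw [hc0, h3]; omega
      exact ⟨x, hx, y, hy, (hAg x y (hnea x hx) (hnea y hy)).mp h1, h2, h3, h4⟩
  · -- a positive class is removed : relabel n ↦ α a, k₀ = k - 2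
    set c := α a with hc
    have hcn : c ≤ n := hca.2
    set ρ : ℕ → ℕ := fun x => if x = c then n else if x = n then c else x with hρ
    have hρρ : ∀ x, ρ (ρ x) = x := by
      intro x
      simp only [hρ]
      split_ifs <;> omega
    have hρ0 : ρ 0 = 0 := by
      simp only [hρ]
      split_ifs <;> omega
    have hρinj : ∀ x y, ρ x = ρ y → x = y := by
      intro x y hxy
      have := congrArg ρ hxy
      rwa [hρρ, hρρ] at this
    have hev2 : Even (k - 2) ↔ Even k := by
      rw [Nat.even_iff, Nat.even_iff]; omega
    have hk2 : (k - 2) / 2 = n - 1 := by rw [hn]; omega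
    have hρlow : ∀ x, x ≤ n - 1 → (ρ x ≤ n ∧ ρ x ≠ c) := by
      intro x hx
      simp only [hρ]
      split_ifs <;> omega
    have hρhigh : ∀ x, x ≤ n → x ≠ c → ρ x ≤ n - 1 := by
      intro x hx hxc
      simp only [hρ]
      split_ifs <;> omega
    refine ⟨k - 2, fun v => ρ (α v), by omega, hsig, ?_, ?_, ?_, ?_⟩
    · intro v hv
      have hv2 := (hrange v (Set.mem_univ v)).2
      constructor
      · intro he hc'
        have : α v = 0 := by
          have := hρinj (α v) 0 (by rw [hρ0]; exact hc')
          exact this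
        exact (hrange v (Set.mem_univ v)).1 (hev2.mp he) this
      · rw [hk2]
        exact hρhigh (α v) hv2 hv
    · intro x hx y hy hadj
      have hadj1 : H1.Adj x y := (hAg x y (hnea x hx) (hnea y hy)).mpr hadj
      have hp := hprop x (Set.mem_univ x) y (Set.mem_univ y) hadj1
      constructor
      · intro ht heq
        exact hp.1 ht (hρinj _ _ heq)
      · rintro ⟨h1, h2⟩
        exact hp.2 ⟨hρinj _ _ (by rw [hρ0]; exact h1), hρinj _ _ (by rw [hρ0]; exact h2)⟩
    · intro i j hi hj hij
      have hi2 := hi.2; rw [hk2] at hi2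
      have hj2 := hj.2; rw [hk2] at hj2
      have hρi := hρlow i hi2
      have hρj := hρlow j hj2
      have hiv : inVal k (ρ i) := ⟨fun he => by
          intro hc'
          exact (hi.1 (hev2.mpr he)) (hρinj i 0 (by rw [hρ0]; exact hc')), hρi.1⟩
      have hjv : inVal k (ρ j) := ⟨fun he => by
          intro hc'
          exact (hj.1 (hev2.mpr he)) (hρinj j 0 (by rw [hρ0]; exact hc')), hρj.1⟩
      have hρij : ρ i ≠ ρ j := fun hc' => hij (hρinj _ _ hc')
      obtain ⟨⟨x, _, y, _, h1, h2, h3, h4⟩, ⟨x', _, y', _, h1', h2', h3', h4'⟩⟩ :=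
        hpairs (ρ i) (ρ j) hiv hjv hρij
      have hx : α x ≠ α a := by rw [h2]; exact hρi.2
      have hy : α y ≠ α a := by rw [h3]; exact hρj.2
      have hx' : α x' ≠ α a := by rw [h2']; exact hρi.2
      have hy' : α y' ≠ α a := by rw [h3']; exact hρj.2
      exact ⟨⟨x, hx, y, hy, (hAg x y (hnea x hx) (hnea y hy)).mp h1,
          by show ρ (α x) = i; rw [h2, hρρ], by show ρ (α y) = j; rw [h3, hρρ], h4⟩,
        ⟨x', hx', y', hy', (hAg x' y' (hnea x' hx') (hnea y' hy')).mp h1',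
          by show ρ (α x') = i; rw [h2', hρρ], by show ρ (α y') = j; rw [h3', hρρ], h4'⟩⟩
    · intro i hi1 hi
      have hi2 := hi.2; rw [hk2] at hi2
      have hρi := hρlow i hi2
      have hρi1 : 1 ≤ ρ i := by
        by_contra hc'
        have : ρ i = 0 := by omega
        have := hρinj i 0 (by rw [hρ0]; exact this)
        omega
      have hiv : inVal k (ρ i) := ⟨fun _ => by omega, hρi.1⟩
      obtain ⟨x, _, y, _, h1, h2, h3, h4⟩ := hdiag (ρ i) hρi1 hiv
      have hx : α x ≠ α a := by rw [h2]; exact hρi.2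
      have hy : α y ≠ α a := by rw [h3]; exact hρi.2
      exact ⟨x, hx, y, hy, (hAg x y (hnea x hx) (hnea y hy)).mp h1,
        by show ρ (α x) = i; rw [h2, hρρ], by show ρ (α y) = i; rw [h3, hρρ], h4⟩

/-- Transfer a complete colouring across the deletion/addition of one edge at `a`,
losing at most 2. -/
lemma transfer [Fintype V] (H1 H2 : SimpleGraph V) (σ : V → V → ℤ) (a : V)
    (hAg : ∀ u v : V, u ≠ a → v ≠ a → (H1.Adj u v ↔ H2.Adj u v))
    {k : ℕ} (hk : 3 ≤ k) (h : AdmitsComplete H1 σ k) :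
    ∃ k', k ≤ k' + 2 ∧ AdmitsComplete H2 σ k' := by
  classical
  obtain ⟨τ, α, hsw, hst⟩ := toState h
  obtain ⟨k₀, α₀, hk₀, hst₀⟩ := removeClass H1 H2 a hAg hk hst
  have hD : ({v | α v ≠ α a} : Set V) = ↑(Finset.univ.filter (fun v => α v ≠ α a)) := by
    ext v; simp
  rw [hD] at hst₀
  obtain ⟨k', τ', α', hk', hsw', hst'⟩ :=
    extend H2 σ (Finset.univ \ Finset.univ.filter (fun v => α v ≠ α a)).card
      (Finset.univ.filter (fun v => α v ≠ α a)) k₀ τ α₀ (le_refl _) hsw hst₀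
  exact ⟨k', by omega, fromState hsw' hst'⟩

/-- The achromatic parameter is bounded. -/
lemma bound [Fintype V] (H : SimpleGraph V) (σ : V → V → ℤ) (k : ℕ)
    (h : AdmitsComplete H σ k) : k ≤ 2 * Fintype.card V + 1 := by
  classical
  obtain ⟨τ, α, _, hsig, hrange, hprop, hpairs, hdiag⟩ := toState h
  rcases Nat.lt_or_ge k 2 with h2 | h2
  · omega
  · have key : ∀ i : ℕ, 1 ≤ i → i ≤ k / 2 → ∃ v : V, α v = i := by
      intro i hi1 hi2
      obtain ⟨x, _, y, _, _, h2, _, _⟩ :=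
        hdiag i hi1 ⟨fun _ => by omega, hi2⟩
      exact ⟨x, h2⟩
    have hv1 : ∃ v : V, α v = 1 := key 1 le_rfl (by omega)
    obtain ⟨v₁, _⟩ := hv1
    set f : ℕ → V := fun i => if h' : 1 ≤ i ∧ i ≤ k / 2 then (key i h'.1 h'.2).choose else v₁
      with hf
    have hfval : ∀ i, 1 ≤ i → i ≤ k / 2 → α (f i) = i := by
      intro i hi1 hi2
      simp only [hf, dif_pos (And.intro hi1 hi2)]
      exact (key i hi1 hi2).choose_spec
    have hcard : (Finset.Icc 1 (k / 2)).card ≤ Fintype.card V := by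
      rw [← Finset.card_univ]
      apply Finset.card_le_card_of_injOn f (fun x _ => Finset.mem_univ (f x))
      intro i hi j hj hij
      rw [Finset.coe_Icc, Set.mem_Icc] at hi hj
      have h1 := hfval i hi.1 hi.2
      have h2 := hfval j hj.1 hj.2
      rw [hij] at h1
      omega
    rw [Nat.card_Icc] at hcard
    omega

end Rest
/-- For every edge `e` of `G`,
`ψ(G,σ) − 2 ≤ ψ(G − e, σ) ≤ ψ(G,σ) + 2`. -/
theorem statement11 {V : Type*} [Fintype V] (G : SimpleGraph V) (σ : V → V → ℤ)
    (hσ : IsSignature σ) (a b : V) (hab : G.Adj a b) :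
    psi G σ - 2 ≤ psi (G.deleteEdges {s(a, b)}) σ ∧
    psi (G.deleteEdges {s(a, b)}) σ ≤ psi G σ + 2 := by
  classical
  set G' := G.deleteEdges {s(a, b)} with hG'
  have hAg : ∀ u v : V, u ≠ a → v ≠ a → (G.Adj u v ↔ G'.Adj u v) := by
    intro u v hu hv
    rw [hG', SimpleGraph.deleteEdges_adj]
    constructor
    · intro h
      refine ⟨h, ?_⟩
      intro hmem
      rw [Set.mem_singleton_iff, Sym2.eq_iff] at hmem
      rcases hmem with ⟨h1, _⟩ | ⟨_, h2⟩
      · exact hu h1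
      · exact hv h2
    · exact fun h => h.1
  have hbG : BddAbove {k | AdmitsComplete G σ k} :=
    ⟨2 * Fintype.card V + 1, fun k hk => bound G σ k hk⟩
  have hbG' : BddAbove {k | AdmitsComplete G' σ k} :=
    ⟨2 * Fintype.card V + 1, fun k hk => bound G' σ k hk⟩
  constructor
  · rcases Nat.lt_or_ge (psi G σ) 3 with h3 | h3
    · omega
    · have hne : {k | AdmitsComplete G σ k}.Nonempty := by
        rw [Set.nonempty_iff_ne_empty]
        intro hc
        have hz : psi G σ = 0 := by
          rw [psi, hc]
          exact csSup_empty
        omega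
      have hmem : AdmitsComplete G σ (psi G σ) := by
        have := Nat.sSup_mem hne hbG
        rw [psi]
        exact this
      obtain ⟨k', hk', hadm⟩ := transfer G G' σ a hAg h3 hmem
      have hle : k' ≤ psi G' σ := by
        rw [psi]
        exact le_csSup hbG' hadm
      omega
  · rcases Nat.lt_or_ge (psi G' σ) 3 with h3 | h3
    · omega
    · have hne : {k | AdmitsComplete G' σ k}.Nonempty := by
        rw [Set.nonempty_iff_ne_empty]
        intro hc
        have hz : psi G' σ = 0 := by
          rw [psi, hc]
          exact csSup_empty
        omega
      have hmem : AdmitsComplete G' σ (psi G' σ) := by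
        have := Nat.sSup_mem hne hbG'
        rw [psi]
        exact this
      obtain ⟨k', hk', hadm⟩ :=
        transfer G' G σ a (fun u v hu hv => (hAg u v hu hv).symm) h3 hmem
      have hle : k' ≤ psi G σ := by
        rw [psi]
        exact le_csSup hbG hadm
      omega
end

section
/- Let (G,σ) be a signed graph and let (H,π) be an elementary homomorphic image of (G,σ). Then χ(G,σ) ≤ χ(H,π) ≤ χ(G,σ) + 1. -/
open SimpleGraph

/-- `(H, π)` is an elementary homomorphic image of `(G, σ)`: it is obtained by
identifying two identifiable non-adjacent vertices `u` and `v` (after possibly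
switching `u` or `v` so that common neighbours see the same signs). -/
def IsElementaryImage {V : Type*} {W : Type*} (G : SimpleGraph V) (σ : V → V → ℤ)
    (H : SimpleGraph W) (π : W → W → ℤ) : Prop :=
  ∃ (u v : V) (f : V → W) (σ'' : V → V → ℤ),
    u ≠ v ∧ ¬G.Adj u v ∧ IsSignature σ'' ∧
    (∃ s : V → ℤ, (∀ x, s x = 1 ∨ s x = -1) ∧ (∀ x, x ≠ u → x ≠ v → s x = 1) ∧
      ∀ x y, σ'' x y = s x * s y * σ x y) ∧
    (∀ w, G.Adj u w → G.Adj v w → σ'' u w = σ'' v w) ∧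
    Function.Surjective f ∧
    (∀ x y, f x = f y ↔ (x = y ∨ (x = u ∧ y = v) ∨ (x = v ∧ y = u))) ∧
    (∀ x y, G.Adj x y → H.Adj (f x) (f y) ∧ π (f x) (f y) = σ'' x y) ∧
    (∀ a b, H.Adj a b → ∃ x y, G.Adj x y ∧ f x = a ∧ f y = b)


section Helpers

lemma mem_colourSet_smul {k : ℕ} {s x : ℤ} (hs : s = 1 ∨ s = -1) (hx : x ∈ colourSet k) :
    s * x ∈ colourSet k := by
  rcases hs with h|h <;> subst h
  · simpa using hx
  · by_cases hEk : Even k <;> simp [colourSet, hEk, Int.natAbs_neg] at hx ⊢ <;> tauto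

lemma switch_ne {s t c a b : ℤ} (hs : s = 1 ∨ s = -1) (ht : t = 1 ∨ t = -1)
    (h : a ≠ c * b) : s * a ≠ (s * t * c) * (t * b) := by
  rcases hs with h1|h1 <;> rcases ht with h2|h2 <;> subst h1 <;> subst h2 <;>
    intro he <;> apply h <;> first | linear_combination he | linear_combination -he

lemma ne_of_natAbs_ne {a b : ℤ} (h : a.natAbs ≠ b.natAbs) : a ≠ b :=
  fun he => h (by rw [he])

lemma colour_bound {k : ℕ} {x : ℤ} (hx : x ∈ colourSet k) : x.natAbs ≤ k / 2 := by
  unfold colourSet at hx; split at hx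
  · exact hx.2
  · exact hx

lemma colour_ne_zero {k : ℕ} {x : ℤ} (hk : Even k) (hx : x ∈ colourSet k) : x ≠ 0 := by
  unfold colourSet at hx; rw [if_pos hk] at hx; exact hx.1

lemma exists_proper {V : Type*} [Fintype V] (G : SimpleGraph V) (σ : V → V → ℤ)
    (hσ : IsSignature σ) : {k | ∃ φ, IsProperColouring G σ k φ}.Nonempty := by
  classical
  obtain ⟨e⟩ := Fintype.truncEquivFin V
  refine ⟨2 * Fintype.card V, fun x => ((e x : ℕ) : ℤ) + 1, ?_, ?_⟩
  · intro x
    have h1 : (e x : ℕ) < Fintype.card V := (e x).isLt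
    have h2 : Even (2 * Fintype.card V) := ⟨Fintype.card V, by ring⟩
    simp only [colourSet, if_pos h2, Set.mem_setOf_eq]
    constructor <;> omega
  · intro x y hxy heq
    beta_reduce at heq
    rcases hσ.2 x y with h|h <;> rw [h] at heq
    · rw [one_mul] at heq
      have h3 : (e x : ℕ) = (e y : ℕ) := by exact_mod_cast add_right_cancel heq
      exact hxy.ne (e.injective (Fin.val_injective h3))
    · rw [neg_one_mul] at heq
      have h1 : (0:ℤ) ≤ ((e x : ℕ) : ℤ) := Int.natCast_nonneg _
      have h2 : (0:ℤ) ≤ ((e y : ℕ) : ℤ) := Int.natCast_nonneg _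
      omega

end Helpers

/-- If `(H,π)` is an elementary homomorphic image of `(G,σ)`, then
`χ(G,σ) ≤ χ(H,π) ≤ χ(G,σ) + 1`. -/
theorem statement12 {V W : Type*} [Fintype V] (G : SimpleGraph V) (σ : V → V → ℤ)
    (H : SimpleGraph W) (π : W → W → ℤ) (hσ : IsSignature σ) (hπ : IsSignature π)
    (h : IsElementaryImage G σ H π) :
    chi G σ ≤ chi H π ∧ chi H π ≤ chi G σ + 1 := by
  classical
  obtain ⟨u, v, f, σ'', huv, hnadj, hσ''sig, ⟨s, hs1, hsout, hsdef⟩, hcommon, hfsurj,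
    hfeq, hGH, hHG⟩ := h
  have : Finite W := Finite.of_surjective f hfsurj
  have : Fintype W := Fintype.ofFinite W
  have hback : ∀ x y, s x * s y * σ'' x y = σ x y := by
    intro x y
    rw [hsdef]
    rcases hs1 x with h|h <;> rcases hs1 y with h'|h' <;> rw [h, h'] <;> ring
  constructor
  · -- chi G σ ≤ chi H π
    obtain ⟨ψ, hψmem, hψprop⟩ := Nat.sInf_mem (exists_proper H π hπ)
    apply Nat.sInf_le
    refine ⟨fun x => s x * ψ (f x), fun x => mem_colourSet_smul (hs1 x) (hψmem (f x)), ?_⟩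
    intro x y hxy
    have hadj := (hGH x y hxy).1
    have hπeq := (hGH x y hxy).2
    have hne : ψ (f x) ≠ σ'' x y * ψ (f y) := by
      rw [← hπeq]; exact hψprop (f x) (f y) hadj
    show s x * ψ (f x) ≠ σ x y * (s y * ψ (f y))
    rw [← hback x y]
    exact switch_ne (hs1 x) (hs1 y) hne
  · -- chi H π ≤ chi G σ + 1
    obtain ⟨φ, hφmem, hφprop⟩ := Nat.sInf_mem (exists_proper G σ hσ)
    set k := chi G σ with hkdef
    set φ'' : V → ℤ := fun x => s x * φ x with hφ''def
    have hφ''mem : ∀ x, φ'' x ∈ colourSet k := fun x => mem_colourSet_smul (hs1 x) (hφmem x)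
    have hφ''prop : ∀ x y, G.Adj x y → φ'' x ≠ σ'' x y * φ'' y := by
      intro x y hxy
      show s x * φ x ≠ σ'' x y * (s y * φ y)
      rw [hsdef]
      exact switch_ne (hs1 x) (hs1 y) (hφprop x y hxy)
    set w := f u with hw
    have hfv : f v = w := (hfeq v u).mpr (Or.inr (Or.inr ⟨rfl, rfl⟩))
    set g : W → V := Function.surjInv hfsurj with hgdef
    have hg : ∀ a, f (g a) = a := fun a => Function.surjInv_eq hfsurj a
    have huniq : ∀ x a, f x = a → a ≠ w → x = g a := by
      intro x a hxa haw
      have hfx : f x = f (g a) := by rw [hxa, hg]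
      rcases (hfeq x (g a)).mp hfx with h'|⟨hxu, _⟩|⟨hxv, _⟩
      · exact h'
      · exact absurd (by rw [← hxa, hxu]) haw
      · exact absurd (by rw [← hxa, hxv, hfv]) haw
    have hedge : ∀ a b, H.Adj a b → a ≠ w → b ≠ w →
        G.Adj (g a) (g b) ∧ π a b = σ'' (g a) (g b) := by
      intro a b hab ha hb
      obtain ⟨x, y, hxy, hfx, hfy⟩ := hHG a b hab
      have hx := huniq x a hfx ha
      have hy := huniq y b hfy hb
      have hπeq := (hGH x y hxy).2
      rw [hfx, hfy] at hπeq
      rw [hx, hy] at hxy hπeq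
      exact ⟨hxy, hπeq⟩
    rcases Nat.even_or_odd k with hEk | hOk
    · -- k even : colour w with 0
      have hk2 : k % 2 = 0 := Nat.even_iff.mp hEk
      apply Nat.sInf_le
      refine ⟨fun a => if a = w then 0 else φ'' (g a), ?_, ?_⟩
      · intro a
        dsimp only
        have hodd : ¬ Even (k+1) := by rw [Nat.even_iff]; omega
        simp only [colourSet, if_neg hodd, Set.mem_setOf_eq]
        by_cases ha : a = w
        · simp [ha]
        · rw [if_neg ha]
          have := colour_bound (hφ''mem (g a))
          omega
      · intro a b hab
        dsimp only
        have hne := hab.ne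
        by_cases ha : a = w <;> by_cases hb : b = w
        · exact absurd (ha.trans hb.symm) hne
        · rw [if_pos ha, if_neg hb]
          have hz := colour_ne_zero hEk (hφ''mem (g b))
          intro hh
          apply hz
          rcases hπ.2 a b with h|h <;> rw [h] at hh <;> omega
        · rw [if_neg ha, if_pos hb]
          have hz := colour_ne_zero hEk (hφ''mem (g a))
          simpa using hz
        · rw [if_neg ha, if_neg hb]
          obtain ⟨hadj, hπeq⟩ := hedge a b hab ha hb
          rw [hπeq]
          exact hφ''prop _ _ hadj
    · -- k odd : colour w with n+1
      have hk2 : k % 2 = 1 := Nat.odd_iff.mp hOk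
      set n := k / 2 with hn
      apply Nat.sInf_le
      refine ⟨fun a => if a = w then ((n:ℤ)+1)
        else if φ'' (g a) = 0 then -π w a * ((n:ℤ)+1) else φ'' (g a), ?_, ?_⟩
      · intro a
        dsimp only
        have heven : Even (k+1) := by rw [Nat.even_iff]; omega
        have hdiv : (k+1)/2 = n + 1 := by omega
        simp only [colourSet, if_pos heven, Set.mem_setOf_eq]
        by_cases ha : a = w
        · rw [if_pos ha]
          constructor <;> omega
        · rw [if_neg ha]
          by_cases hz : φ'' (g a) = 0
          · rw [if_pos hz]
            rcases hπ.2 w a with h|h <;> rw [h] <;> constructor <;>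
              simp only [neg_one_mul, one_mul, neg_neg, Int.natAbs_neg] <;> omega
          · rw [if_neg hz]
            have := colour_bound (hφ''mem (g a))
            exact ⟨hz, by omega⟩
      · intro a b hab
        dsimp only
        have hne := hab.ne
        by_cases ha : a = w <;> by_cases hb : b = w
        · exact absurd (ha.trans hb.symm) hne
        · rw [if_pos ha, if_neg hb, ha]
          by_cases hz : φ'' (g b) = 0
          · rw [if_pos hz]
            rcases hπ.2 w b with h|h <;> rw [h] <;> intro hh <;> omega
          · rw [if_neg hz]
            apply ne_of_natAbs_ne
            have hb1 := colour_bound (hφ''mem (g b))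
            rcases hπ.2 w b with h|h <;> rw [h] <;>
              simp only [neg_one_mul, one_mul, neg_neg, Int.natAbs_neg] <;> omega
        · rw [if_neg ha, if_pos hb, hb]
          by_cases hz : φ'' (g a) = 0
          · rw [if_pos hz, hπ.1 a w]
            rcases hπ.2 w a with h|h <;> rw [h] <;> intro hh <;> omega
          · rw [if_neg hz]
            apply ne_of_natAbs_ne
            have ha1 := colour_bound (hφ''mem (g a))
            rcases hπ.2 a w with h|h <;> rw [h] <;>
              simp only [neg_one_mul, one_mul, neg_neg, Int.natAbs_neg] <;> omega
        · rw [if_neg ha, if_neg hb]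
          obtain ⟨hadj, hπeq⟩ := hedge a b hab ha hb
          by_cases hza : φ'' (g a) = 0 <;> by_cases hzb : φ'' (g b) = 0
          · exact absurd (by rw [hza, hzb]; ring) (hφ''prop _ _ hadj)
          · rw [if_pos hza, if_neg hzb]
            apply ne_of_natAbs_ne
            have hb1 := colour_bound (hφ''mem (g b))
            rcases hπ.2 w a with h|h <;> rcases hπ.2 a b with h'|h' <;> rw [h, h'] <;>
              simp only [neg_one_mul, one_mul, neg_neg, Int.natAbs_neg] <;> omega
          · rw [if_neg hza, if_pos hzb]
            apply ne_of_natAbs_ne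
            have ha1 := colour_bound (hφ''mem (g a))
            rcases hπ.2 w b with h|h <;> rcases hπ.2 a b with h'|h' <;> rw [h, h'] <;>
              simp only [neg_one_mul, one_mul, neg_neg, Int.natAbs_neg] <;> omega
          · rw [if_neg hza, if_neg hzb, hπeq]
            exact hφ''prop _ _ hadj
end

section
/- If a signed graph (H,π) is obtained from a signed graph (G,σ) by a (possibly empty) finite sequence of elementary homomorphisms, each identifying two identifiable vertices, then ψ(H,π) ≤ ψ(G,σ). -/
open SimpleGraph


/-- A bundled signed graph. -/
structure BundledSignedGraph : Type 1 where
  carrier : Type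
  graph : SimpleGraph carrier
  sign : carrier → carrier → ℤ

/-- One elementary homomorphism step between bundled signed graphs. -/
def ElemStep (A B : BundledSignedGraph) : Prop :=
  IsSignature A.sign ∧ IsSignature B.sign ∧
    IsElementaryImage A.graph A.sign B.graph B.sign

/-! Identifying two vertices is a map `f` sending the edges of `G` onto the edges of `H`,
sign-preserving once `σ` is switched at the identified vertices. Composing with `f` therefore
pulls a complete colouring of a switching of `(H, π)` back to a complete colouring, with the
same colour set, of a switching of `(G, σ)`. Every value `i ≥ 1` of a complete `k`-colouring
is taken at some vertex, so `k ≤ 2 |V| + 1` and `ψ` of a finite graph is the supremum of a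
bounded set. -/

lemma mul_eq_one_or_eq_neg_one {a b : ℤ} (ha : a = 1 ∨ a = -1) (hb : b = 1 ∨ b = -1) :
    a * b = 1 ∨ a * b = -1 :=
  Int.isUnit_iff.mp ((Int.isUnit_iff.mpr ha).mul (Int.isUnit_iff.mpr hb))

lemma IsSignature.switch {V : Type*} {σ : V → V → ℤ} (hσ : IsSignature σ) {s : V → ℤ}
    (hs : ∀ v, s v = 1 ∨ s v = -1) : IsSignature fun u v => s u * s v * σ u v :=
  ⟨fun u v => by
    show s u * s v * σ u v = s v * s u * σ v u
    rw [hσ.1 u v, mul_comm (s u)],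
    fun u v => mul_eq_one_or_eq_neg_one (mul_eq_one_or_eq_neg_one (hs u) (hs v)) (hσ.2 u v)⟩

lemma SwitchEquiv.trans {V : Type*} {σ σ' σ'' : V → V → ℤ} (h : SwitchEquiv σ σ')
    (h' : SwitchEquiv σ' σ'') : SwitchEquiv σ σ'' := by
  obtain ⟨s, hs, hσ'⟩ := h
  obtain ⟨s', hs', hσ''⟩ := h'
  refine ⟨fun v => s' v * s v, fun v => mul_eq_one_or_eq_neg_one (hs' v) (hs v), fun u v => ?_⟩
  rw [hσ'', hσ']
  ring

lemma AdmitsComplete.of_switchEquiv {V : Type*} {G : SimpleGraph V} {σ σ' : V → V → ℤ}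
    {k : ℕ} (hσσ' : SwitchEquiv σ σ') : AdmitsComplete G σ' k → AdmitsComplete G σ k := by
  rintro ⟨τ, hτ, hσ'τ, hφ⟩
  exact ⟨τ, hτ, hσσ'.trans hσ'τ, hφ⟩

lemma natCast_mem_colourSet {i k : ℕ} (hi : 1 ≤ i) (hik : i ≤ k / 2) :
    (i : ℤ) ∈ colourSet k := by
  unfold colourSet
  split_ifs <;> simp <;> omega

lemma AdmitsComplete.div_two_le_card {V : Type*} [Finite V] {G : SimpleGraph V}
    {σ : V → V → ℤ} {k : ℕ} (hk : AdmitsComplete G σ k) : k / 2 ≤ Nat.card V := by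
  obtain ⟨_, -, -, φ, -, -, hdiag⟩ := hk
  have hcover : Set.Icc 1 (k / 2) ⊆ Set.range fun v => (φ v).natAbs := by
    rintro i ⟨hi1, hi2⟩
    obtain ⟨u, -, -, hu, -, -⟩ := hdiag i hi1 (natCast_mem_colourSet hi1 hi2)
    exact ⟨u, hu⟩
  calc k / 2 = Nat.card (Set.Icc 1 (k / 2)) := by simp
    _ ≤ Nat.card (Set.range fun v => (φ v).natAbs) := Nat.card_mono (Set.finite_range _) hcover
    _ ≤ Nat.card V := Finite.card_range_le _

lemma bddAbove_setOf_admitsComplete {V : Type*} [Finite V] (G : SimpleGraph V)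
    (σ : V → V → ℤ) : BddAbove {k | AdmitsComplete G σ k} :=
  ⟨2 * Nat.card V + 1, fun _ hk => by have := hk.div_two_le_card; omega⟩

lemma psi_le_psi_of_forall_admitsComplete {V W : Type*} [Finite V] {G : SimpleGraph V}
    {σ : V → V → ℤ} {H : SimpleGraph W} {π : W → W → ℤ}
    (h : ∀ k, AdmitsComplete H π k → AdmitsComplete G σ k) :
    psi H π ≤ psi G σ :=
  csSup_le_csSup' (bddAbove_setOf_admitsComplete G σ) h

structure IsSignedEdgeSurjectiveHom {V W : Type*} (G : SimpleGraph V) (σ : V → V → ℤ)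
    (H : SimpleGraph W) (π : W → W → ℤ) (f : V → W) : Prop where
  map_adj ⦃x y : V⦄ : G.Adj x y → H.Adj (f x) (f y)
  map_sign ⦃x y : V⦄ : G.Adj x y → π (f x) (f y) = σ x y
  exists_lift ⦃a b : W⦄ : H.Adj a b → ∃ x y, G.Adj x y ∧ f x = a ∧ f y = b

namespace IsSignedEdgeSurjectiveHom

variable {V W : Type*} {G : SimpleGraph V} {σ : V → V → ℤ} {H : SimpleGraph W}
  {π : W → W → ℤ} {f : V → W}

lemma switch (hf : IsSignedEdgeSurjectiveHom G σ H π f) (t : W → ℤ) :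
    IsSignedEdgeSurjectiveHom G (fun x y => t (f x) * t (f y) * σ x y) H
      (fun a b => t a * t b * π a b) f where
  map_adj := hf.map_adj
  map_sign _ _ hxy := by simp only [hf.map_sign hxy]
  exists_lift := hf.exists_lift

lemma isProperColouring_comp (hf : IsSignedEdgeSurjectiveHom G σ H π f) {k : ℕ} {φ : W → ℤ}
    (hφ : IsProperColouring H π k φ) : IsProperColouring G σ k (φ ∘ f) :=
  ⟨fun x => hφ.1 (f x), fun _ _ hxy => hf.map_sign hxy ▸ hφ.2 _ _ (hf.map_adj hxy)⟩

lemma hasEdgeType_comp (hf : IsSignedEdgeSurjectiveHom G σ H π f) {φ : W → ℤ} {i j : ℕ} {s : ℤ}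
    (h : HasEdgeType H π φ i j s) : HasEdgeType G σ (φ ∘ f) i j s := by
  obtain ⟨a, b, hab, ha, hb, hs⟩ := h
  obtain ⟨x, y, hxy, rfl, rfl⟩ := hf.exists_lift hab
  exact ⟨x, y, hxy, ha, hb, by rw [← hs, redSign, redSign, hf.map_sign hxy]; rfl⟩

lemma isCompleteColouring_comp (hf : IsSignedEdgeSurjectiveHom G σ H π f) {k : ℕ} {φ : W → ℤ}
    (hφ : IsCompleteColouring H π k φ) : IsCompleteColouring G σ k (φ ∘ f) :=
  ⟨hf.isProperColouring_comp hφ.1,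
    fun i j hi hj hij => ⟨hf.hasEdgeType_comp (hφ.2.1 i j hi hj hij).1,
      hf.hasEdgeType_comp (hφ.2.1 i j hi hj hij).2⟩,
    fun i hi hik => hf.hasEdgeType_comp (hφ.2.2 i hi hik)⟩

lemma admitsComplete (hf : IsSignedEdgeSurjectiveHom G σ H π f) (hσ : IsSignature σ) {k : ℕ}
    (hk : AdmitsComplete H π k) : AdmitsComplete G σ k := by
  obtain ⟨π', -, ⟨t, ht, hπ'⟩, φ, hφ⟩ := hk
  obtain rfl : π' = fun a b => t a * t b * π a b := funext₂ hπ'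
  exact ⟨_, hσ.switch fun x => ht (f x), ⟨t ∘ f, fun x => ht (f x), fun _ _ => rfl⟩, φ ∘ f,
    (hf.switch t).isCompleteColouring_comp hφ⟩

end IsSignedEdgeSurjectiveHom

lemma IsElementaryImage.exists_isSignedEdgeSurjectiveHom {V W : Type*} {G : SimpleGraph V}
    {σ : V → V → ℤ} {H : SimpleGraph W} {π : W → W → ℤ} (h : IsElementaryImage G σ H π) :
    ∃ (σ' : V → V → ℤ) (f : V → W), IsSignature σ' ∧ SwitchEquiv σ σ' ∧
      Function.Surjective f ∧ IsSignedEdgeSurjectiveHom G σ' H π f := by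
  obtain ⟨-, -, f, σ', -, -, hσ', ⟨s, hs, -, hσσ'⟩, -, hf, -, hedge, hlift⟩ := h
  exact ⟨σ', f, hσ', ⟨s, hs, hσσ'⟩, hf,
    ⟨fun _ _ hxy => (hedge _ _ hxy).1, fun _ _ hxy => (hedge _ _ hxy).2, hlift⟩⟩

lemma psi_le_psi_of_elemStep {A B : BundledSignedGraph} [Finite A.carrier]
    (h : ElemStep A B) : Finite B.carrier ∧ psi B.graph B.sign ≤ psi A.graph A.sign := by
  obtain ⟨σ', f, hσ', hσσ', hf, hhom⟩ := h.2.2.exists_isSignedEdgeSurjectiveHom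
  exact ⟨.of_surjective f hf,
    psi_le_psi_of_forall_admitsComplete fun _ hk =>
      (hhom.admitsComplete hσ' hk).of_switchEquiv hσσ'⟩

theorem statement14_general (A B : BundledSignedGraph) [Finite A.carrier]
    (h : Relation.ReflTransGen ElemStep A B) :
    psi B.graph B.sign ≤ psi A.graph A.sign := by
  revert ‹Finite A.carrier›
  induction h using Relation.ReflTransGen.head_induction_on with
  | refl => exact le_rfl
  | head hAC _ ih =>
    intro _
    obtain ⟨_, hCA⟩ := psi_le_psi_of_elemStep hAC
    exact ih.trans hCA

/-- If `(H,π)` is obtained from `(G,σ)` by a (possibly empty) finite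
sequence of elementary homomorphisms, then `ψ(H,π) ≤ ψ(G,σ)`. -/
theorem statement14 (A B : BundledSignedGraph) [Finite A.carrier]
    (hA : IsSignature A.sign) (hB : IsSignature B.sign)
    (h : Relation.ReflTransGen ElemStep A B) :
    psi B.graph B.sign ≤ psi A.graph A.sign :=
  statement14_general A B h
end

section
/- For every k ≥ 2 and every N ≥ 1, there exists an irreducible signed graph (G,σ) with |V(G)| ≥ N and ψ(G,σ) ≤ k. (That is, there exist arbitrarily large irreducible signed graphs with achromatic number at most k.) -/
open SimpleGraph

/-- A signed graph is irreducible if no two distinct non-adjacent vertices have, in some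
equivalent signed graph, identical signed neighbourhoods. -/
def IsIrreducibleSG {V : Type*} (G : SimpleGraph V) (σ : V → V → ℤ) : Prop :=
  ¬ ∃ (u v : V) (σ' : V → V → ℤ), u ≠ v ∧ ¬G.Adj u v ∧
      IsSignature σ' ∧ SwitchEquiv σ σ' ∧
      (∀ w, G.Adj u w ↔ G.Adj v w) ∧ (∀ w, G.Adj u w → σ' u w = σ' v w)

/-- Key lemma: the all-negative complete graph admits no complete `k'`-colouring
for any `k' ≥ 3`. -/
lemma no_complete_negK (n k' : ℕ) (h3 : 3 ≤ k') :
    ¬ AdmitsComplete (⊤ : SimpleGraph (Fin n)) (fun _ _ => (-1 : ℤ)) k' := by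
  rintro ⟨σ', hsig, ⟨s, hs, hσ'⟩, φ, ⟨⟨hmem, hprop⟩, hpairs, hdiag⟩⟩
  have hσ2 : ∀ u v : Fin n, σ' u v = s u * s v * (-1) := fun u v => hσ' u v
  -- on a nonzero value class, the "switched sign" s·isgn(φ) is constant
  have hX : ∀ u v : Fin n, (φ u).natAbs = (φ v).natAbs → (φ u).natAbs ≠ 0 →
      s u * isgn (φ u) = s v * isgn (φ v) := by
    intro u v habs h0
    by_cases h : u = v
    · subst h; rfl
    · have hp := hprop u v (by simpa using h)
      rw [hσ2 u v] at hp
      rcases hs u with a | a <;> rcases hs v with b | b <;>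
        rw [a, b] at hp ⊢ <;> simp only [isgn] <;> split_ifs <;> omega
  have hprod : ∀ u v : Fin n,
      (s u * isgn (φ u)) * (s v * isgn (φ v)) = -(redSign σ' φ u v) := by
    intro u v
    unfold redSign
    rw [hσ2 u v]; ring
  rcases Nat.lt_or_ge k' 4 with h4 | h4
  · -- k' = 3 : use the pair of values (0, 1)
    have hk3 : k' = 3 := by omega
    subst hk3
    have m0 : ((0 : ℕ) : ℤ) ∈ colourSet 3 := by
      unfold colourSet
      rw [if_neg (by decide : ¬ Even 3)]
      norm_num
    have m1 : ((1 : ℕ) : ℤ) ∈ colourSet 3 := by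
      unfold colourSet
      rw [if_neg (by decide : ¬ Even 3)]
      norm_num
    obtain ⟨⟨u1, v1, hadj1, ha1, hb1, hr1⟩, ⟨u2, v2, hadj2, ha2, hb2, hr2⟩⟩ :=
      hpairs 0 1 m0 m1 (by norm_num)
    have hz1 : φ u1 = 0 := Int.natAbs_eq_zero.mp ha1
    have hz2 : φ u2 = 0 := Int.natAbs_eq_zero.mp ha2
    have hu : u1 = u2 := by
      by_contra h
      have hp := hprop u1 u2 (by simpa using h)
      rw [hz1, hz2] at hp
      simp at hp
    have hY : s v1 * isgn (φ v1) = s v2 * isgn (φ v2) :=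
      hX v1 v2 (by rw [hb1, hb2]) (by rw [hb1]; omega)
    have e1 := hprod u1 v1
    have e2 := hprod u2 v2
    rw [hr1] at e1; rw [hr2] at e2
    rw [hu, hY] at e1
    rw [e1] at e2
    norm_num at e2
  · -- k' ≥ 4 : use the pair of values (1, 2)
    have m1 : ((1 : ℕ) : ℤ) ∈ colourSet k' := by
      unfold colourSet
      split_ifs with h <;> rw [Nat.even_iff] at h <;>
        simp only [Set.mem_setOf_eq, Nat.cast_one, Int.natAbs_one] <;> omega
    have m2 : ((2 : ℕ) : ℤ) ∈ colourSet k' := by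
      unfold colourSet
      split_ifs with h <;> rw [Nat.even_iff] at h <;>
        simp only [Set.mem_setOf_eq, Nat.cast_ofNat] <;> norm_num <;> omega
    obtain ⟨⟨u1, v1, hadj1, ha1, hb1, hr1⟩, ⟨u2, v2, hadj2, ha2, hb2, hr2⟩⟩ :=
      hpairs 1 2 m1 m2 (by norm_num)
    have hXu : s u1 * isgn (φ u1) = s u2 * isgn (φ u2) :=
      hX u1 u2 (by rw [ha1, ha2]) (by rw [ha1]; omega)
    have hXv : s v1 * isgn (φ v1) = s v2 * isgn (φ v2) :=
      hX v1 v2 (by rw [hb1, hb2]) (by rw [hb1]; omega)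
    have e1 := hprod u1 v1
    have e2 := hprod u2 v2
    rw [hr1] at e1; rw [hr2] at e2
    rw [hXu, hXv] at e1
    rw [e1] at e2
    norm_num at e2

/-- For every `k ≥ 2` there exist arbitrarily large irreducible signed
graphs with achromatic number at most `k`. -/
theorem statement17 (k N : ℕ) (hk : 2 ≤ k) (hN : 1 ≤ N) :
    ∃ (n : ℕ) (G : SimpleGraph (Fin n)) (σ : Fin n → Fin n → ℤ),
      IsSignature σ ∧ IsIrreducibleSG G σ ∧ N ≤ n ∧ psi G σ ≤ k := by
  refine ⟨N, ⊤, fun _ _ => -1, ⟨fun _ _ => rfl, fun _ _ => Or.inr rfl⟩, ?_, le_rfl, ?_⟩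
  · rintro ⟨u, v, σ', hne, hnadj, -⟩
    exact hnadj (by simpa using hne)
  · unfold psi
    apply csSup_le'
    intro m hm
    by_contra h
    exact no_complete_negK N m (by omega) hm
end
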